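/- arXiv:1006.1338 — 11 statements merged into one kernel-verified Lean document; each statement's English description precedes it below -/
import Mathlib

section
/- Let ε ∈ (0,1), τ_ε = (1−√ε)/(1+√ε), and p_ε(μ) = ∏_{k=0}^∞ (1 − √ε·μ·τ_ε^k) for μ ∈ ℂ. Then for every M > 0, p_ε converges uniformly to μ ↦ exp(−μ/2) on the closed disk {μ ∈ ℂ : |μ| ≤ M} as ε → 0⁺; that is, for every δ > 0 there exists ε₀ ∈ (0,1) such that for all ε ∈ (0,ε₀) and all μ ∈ ℂ with |μ| ≤ M, |p_ε(μ) − exp(−μ/2)| < δ. -/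
/-!
Since `∑ₖ √ε μ τ_ε^k = μ (1 + √ε) / 2` and `∑ₖ |√ε μ τ_ε^k|² = √ε |μ|² (1 + √ε)² / 4`, writing
`∏ (1 - aₖ) = exp (∑ log (1 - aₖ))` and using `|log (1 - a) + a| ≤ |a|²` for `|a| ≤ 1/2` shows that
the logarithm of `p_ε(μ)` is `-μ/2 + O(√ε (|μ|² + |μ|))`, uniformly on bounded sets of `μ`.
-/

open Complex Filter Topology

namespace Complex

theorem norm_exp_sub_exp_le {z w : ℂ} (h : ‖z - w‖ ≤ 1) :
    ‖exp z - exp w‖ ≤ 2 * ‖exp w‖ * ‖z - w‖ := by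
  have : exp z - exp w = exp w * (exp (z - w) - 1) := by
    rw [mul_sub, ← exp_add, add_sub_cancel, mul_one]
  rw [this, norm_mul, mul_assoc, mul_left_comm]
  gcongr
  exact norm_exp_sub_one_le h

theorem norm_log_one_add_sub_self_le_sq {z : ℂ} (hz : ‖z‖ ≤ 1 / 2) :
    ‖log (1 + z) - z‖ ≤ ‖z‖ ^ 2 := by
  have hinv : (1 - ‖z‖)⁻¹ ≤ 2 := by
    rw [inv_le_comm₀ (by linarith) two_pos]; linarith
  calc ‖log (1 + z) - z‖ ≤ ‖z‖ ^ 2 * (1 - ‖z‖)⁻¹ / 2 :=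
        norm_log_one_add_sub_self_le (by linarith)
    _ ≤ ‖z‖ ^ 2 * 2 / 2 := by gcongr
    _ = ‖z‖ ^ 2 := by ring

variable {ι : Type*} {a : ι → ℂ}

theorem norm_tsum_log_one_add_sub_tsum_le (ha : ∀ i, ‖a i‖ ≤ 1 / 2) (hsum : Summable a) :
    ‖∑' i, log (1 + a i) - ∑' i, a i‖ ≤ ∑' i, ‖a i‖ ^ 2 := by
  have hsq : Summable fun i => ‖a i‖ ^ 2 :=
    (hsum.norm.mul_left (1 / 2)).of_nonneg_of_le (fun _ => by positivity)
      fun i => by rw [sq]; exact mul_le_mul_of_nonneg_right (ha i) (norm_nonneg _)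
  rw [← (summable_log_one_add_of_summable hsum).tsum_sub hsum]
  exact tsum_of_norm_bounded hsq.hasSum fun i => norm_log_one_add_sub_self_le_sq (ha i)

theorem norm_tprod_one_add_sub_exp_le (ha : ∀ i, ‖a i‖ ≤ 1 / 2) (hsum : Summable a) (w : ℂ)
    (h : ‖∑' i, a i - w‖ + ∑' i, ‖a i‖ ^ 2 ≤ 1) :
    ‖∏' i, (1 + a i) - exp w‖ ≤ 2 * ‖exp w‖ * (‖∑' i, a i - w‖ + ∑' i, ‖a i‖ ^ 2) := by
  have hne : ∀ i, 1 + a i ≠ 0 := fun i hi => by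
    have := ha i
    rw [eq_neg_of_add_eq_zero_right hi, norm_neg, norm_one] at this
    norm_num at this
  have hlog : ‖∑' i, log (1 + a i) - w‖ ≤ ‖∑' i, a i - w‖ + ∑' i, ‖a i‖ ^ 2 := by
    calc ‖∑' i, log (1 + a i) - w‖
        = ‖(∑' i, a i - w) + (∑' i, log (1 + a i) - ∑' i, a i)‖ := by ring_nf
      _ ≤ _ := (norm_add_le _ _).trans (by gcongr; exact norm_tsum_log_one_add_sub_tsum_le ha hsum)
  rw [← cexp_tsum_eq_tprod hne (summable_log_one_add_of_summable hsum)]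
  exact (norm_exp_sub_exp_le (hlog.trans h)).trans (by gcongr)

end Complex

section Prefactor

variable {s : ℝ}

theorem abs_one_sub_div_one_add_lt_one (hs0 : 0 < s) : |(1 - s) / (1 + s)| < 1 := by
  rw [abs_lt, lt_div_iff₀ (by linarith), div_lt_one (by linarith)]
  constructor <;> linarith

theorem hasSum_mul_one_sub_div_one_add_pow (hs0 : 0 < s) (μ : ℂ) :
    HasSum (fun k : ℕ => (s : ℂ) * μ * (((1 - s) / (1 + s) : ℝ) : ℂ) ^ k) (μ * (1 + s) / 2) := by
  have hτ : ‖(((1 - s) / (1 + s) : ℝ) : ℂ)‖ < 1 := by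
    rw [norm_real, Real.norm_eq_abs]; exact abs_one_sub_div_one_add_lt_one hs0
  have hτc : 1 - (1 - s) / (1 + s) = 2 * s / (1 + s) := by
    field_simp; ring
  have hs : (s : ℂ) ≠ 0 := by exact_mod_cast hs0.ne'
  have h1s : (1 + s : ℂ) ≠ 0 := by exact_mod_cast (by linarith : 1 + s ≠ 0)
  have hval : μ * (1 + s) / 2 = (s : ℂ) * μ * (1 - (((1 - s) / (1 + s) : ℝ) : ℂ))⁻¹ := by
    rw [← ofReal_one, ← ofReal_sub, hτc]
    push_cast
    field_simp
  rw [hval]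
  exact (hasSum_geometric_of_norm_lt_one hτ).mul_left _

theorem tsum_norm_mul_one_sub_div_one_add_pow_sq (hs0 : 0 < s) (μ : ℂ) :
    ∑' k : ℕ, ‖(s : ℂ) * μ * (((1 - s) / (1 + s) : ℝ) : ℂ) ^ k‖ ^ 2
      = s * ‖μ‖ ^ 2 * (1 + s) ^ 2 / 4 := by
  have hτ1 : ((1 - s) / (1 + s)) ^ 2 < 1 := by
    rw [sq_lt_one_iff_abs_lt_one]; exact abs_one_sub_div_one_add_lt_one hs0
  have hτc : 1 - ((1 - s) / (1 + s)) ^ 2 = 4 * s / (1 + s) ^ 2 := by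
    field_simp; ring
  simp_rw [norm_mul, norm_pow, norm_real, Real.norm_eq_abs, abs_of_pos hs0, mul_pow, ← pow_mul,
    pow_mul', sq_abs]
  rw [tsum_mul_left, tsum_geometric_of_lt_one (sq_nonneg _) hτ1, hτc]
  field_simp

theorem norm_prefactor_sub_exp_neg_half_le (hs0 : 0 < s) (hs1 : s ≤ 1) {μ : ℂ}
    (hμ : s * (‖μ‖ ^ 2 + ‖μ‖) ≤ 1 / 2) :
    ‖∏' k : ℕ, (1 - (s : ℂ) * μ * (((1 - s) / (1 + s) : ℝ) : ℂ) ^ k) - exp (-μ / 2)‖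
      ≤ 2 * Real.exp (‖μ‖ / 2) * (s * (‖μ‖ ^ 2 + ‖μ‖)) := by
  set a : ℕ → ℂ := fun k => -((s : ℂ) * μ * (((1 - s) / (1 + s) : ℝ) : ℂ) ^ k) with ha_def
  have hτ0 : 0 ≤ (1 - s) / (1 + s) := by bound
  have hτ1 : (1 - s) / (1 + s) ≤ 1 := by rw [div_le_one (by linarith)]; linarith
  have ha : ∀ k, ‖a k‖ ≤ 1 / 2 := fun k => by
    simp only [ha_def, norm_neg, norm_mul, norm_pow, norm_real, Real.norm_eq_abs,
      abs_of_pos hs0, abs_of_nonneg hτ0]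
    calc s * ‖μ‖ * ((1 - s) / (1 + s)) ^ k ≤ s * ‖μ‖ * 1 := by gcongr; exact pow_le_one₀ hτ0 hτ1
      _ ≤ 1 / 2 := by nlinarith [norm_nonneg μ]
  have hsum : HasSum a (-(μ * (1 + s) / 2)) := (hasSum_mul_one_sub_div_one_add_pow hs0 μ).neg
  have hsq : ∑' k, ‖a k‖ ^ 2 = s * ‖μ‖ ^ 2 * (1 + s) ^ 2 / 4 := by
    simp only [ha_def, norm_neg]; exact tsum_norm_mul_one_sub_div_one_add_pow_sq hs0 μ
  have hdiff : ‖∑' k, a k - -μ / 2‖ = s * ‖μ‖ / 2 := by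
    rw [hsum.tsum_eq, show -(μ * (1 + s) / 2) - -μ / 2 = -((s / 2 : ℝ) : ℂ) * μ by push_cast; ring,
      norm_mul, norm_neg, norm_real, Real.norm_of_nonneg (by positivity)]
    ring
  have herr : ‖∑' k, a k - -μ / 2‖ + ∑' k, ‖a k‖ ^ 2 ≤ s * (‖μ‖ ^ 2 + ‖μ‖) := by
    rw [hdiff, hsq]
    have h4 : (1 + s) ^ 2 ≤ 4 := by nlinarith
    nlinarith [norm_nonneg μ, mul_le_mul_of_nonneg_left h4 (mul_nonneg hs0.le (sq_nonneg ‖μ‖))]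
  have hexp : ‖exp (-μ / 2)‖ ≤ Real.exp (‖μ‖ / 2) :=
    (norm_exp_le_exp_norm _).trans_eq (by rw [norm_div, norm_neg, RCLike.norm_ofNat])
  simp only [sub_eq_add_neg]
  refine (norm_tprod_one_add_sub_exp_le ha hsum.summable _ (herr.trans (by linarith))).trans ?_
  gcongr

end Prefactor

theorem prefactor_uniform_limit_general (M : ℝ) :
    ∀ δ > (0 : ℝ), ∃ ε₀ ∈ Set.Ioo (0 : ℝ) 1, ∀ ε ∈ Set.Ioo (0 : ℝ) ε₀,
      ∀ μ : ℂ, ‖μ‖ ≤ M →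
        ‖((∏' k : ℕ, (1 - (Real.sqrt ε : ℂ) * μ *
              (((1 - Real.sqrt ε) / (1 + Real.sqrt ε) : ℝ) : ℂ) ^ k))
            - Complex.exp (-μ / 2))‖ < δ := by
  intro δ hδ
  have hlin : Tendsto (fun s : ℝ => s * (M ^ 2 + M)) (𝓝 0) (𝓝 0) := by
    simpa using (tendsto_id (x := 𝓝 (0 : ℝ))).mul_const (M ^ 2 + M)
  have hsmall : ∀ᶠ s in 𝓝 (0 : ℝ), s < 1 ∧ s * (M ^ 2 + M) < 1 / 2 ∧
      2 * Real.exp (M / 2) * (s * (M ^ 2 + M)) < δ :=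
    (eventually_lt_nhds one_pos).and <| (hlin.eventually_lt_const one_half_pos).and <|
      Tendsto.eventually_lt_const (by rwa [mul_zero]) (hlin.const_mul _)
  have hsqrt : Tendsto Real.sqrt (𝓝[>] 0) (𝓝 0) :=
    (Real.continuous_sqrt.tendsto' 0 0 Real.sqrt_zero).mono_left nhdsWithin_le_nhds
  obtain ⟨ε₁, hε₁, hε₁_small⟩ := (nhdsGT_basis (0 : ℝ)).eventually_iff.mp (hsqrt.eventually hsmall)
  refine ⟨min ε₁ (1 / 2), ⟨by positivity, by linarith [min_le_right ε₁ (1 / 2)]⟩, ?_⟩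
  rintro ε ⟨hε0, hεε₀⟩ μ hμ
  obtain ⟨hs1, hsC, hsδ⟩ := hε₁_small ⟨hε0, hεε₀.trans_le (min_le_left _ _)⟩
  have hs0 : 0 < Real.sqrt ε := Real.sqrt_pos.mpr hε0
  have hμC : ‖μ‖ ^ 2 + ‖μ‖ ≤ M ^ 2 + M := by gcongr
  refine (norm_prefactor_sub_exp_neg_half_le hs0 hs1.le ?_).trans_lt (hsδ.trans_le' ?_)
  · exact (mul_le_mul_of_nonneg_left hμC hs0.le).trans hsC.le
  · gcongr

/-- Uniform convergence of the prefactor infinite product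
`p_ε(μ) = ∏_{k=0}^∞ (1 − √ε·μ·τ_ε^k)` (with `τ_ε = (1−√ε)/(1+√ε)`) to `exp(−μ/2)`
on closed disks, as `ε → 0⁺`. -/
theorem prefactor_uniform_limit (M : ℝ) (hM : 0 < M) :
    ∀ δ > (0 : ℝ), ∃ ε₀ ∈ Set.Ioo (0 : ℝ) 1, ∀ ε ∈ Set.Ioo (0 : ℝ) ε₀,
      ∀ μ : ℂ, ‖μ‖ ≤ M →
        ‖((∏' k : ℕ, (1 - (Real.sqrt ε : ℂ) * μ *
              (((1 - Real.sqrt ε) / (1 + Real.sqrt ε) : ℝ) : ℂ) ^ k))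
            - Complex.exp (-μ / 2))‖ < δ :=
  prefactor_uniform_limit_general M
end

section
/- For every z ∈ ℂ with z ≠ 1 satisfying |arg(z)| ≤ π/10, |Im(z)| < 1/10, and Re(z) ≤ 1, one has Re(log(1 − z)) ≤ Re(−z − z²/2). -/
/-!
Put `r = ‖1 - z‖`, so that `Re log (1 - z) = log r`, and `u = Re (2z + z²)`. For `0 < r ≤ 1` the
Padé-type bound `log r ≤ 2 (r - 1) / (r + 1)` reduces the claim to the algebraic inequality
`r (4 + u) ≤ 4 - u`. Squared, this is a polynomial inequality in `Re z` and `Im z`, valid on the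
region `3 |Im z| ≤ Re z ≤ 1`, `|Im z| ≤ 1/10`; the sector condition `3 |Im z| ≤ Re z` is what
`|arg z| ≤ π/10` gives, since `tan (π/10) < 1/3`.
-/

open Real

lemma Real.log_le_two_mul_sub_one_div_add_one {r : ℝ} (hr0 : 0 < r) (hr1 : r ≤ 1) :
    log r ≤ 2 * (r - 1) / (r + 1) := by
  have h := le_log_one_add_of_nonneg (sub_nonneg.2 ((one_le_inv₀ hr0).2 hr1))
  rw [add_sub_cancel, log_inv] at h
  have hrw : 2 * (r⁻¹ - 1) / (r⁻¹ - 1 + 2) = -(2 * (r - 1) / (r + 1)) := by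
    have hden : r⁻¹ - 1 + 2 = (r + 1) / r := by field_simp; ring
    rw [hden]
    field_simp
    ring
  linarith

lemma Real.three_mul_abs_sin_le_cos {θ : ℝ} (h : |θ| ≤ π / 10) : 3 * |sin θ| ≤ cos θ := by
  have hθ : |θ| ≤ 0.315 := by linarith [pi_lt_d2]
  have hsq : θ ^ 2 ≤ 0.315 ^ 2 := by
    rw [← sq_abs]
    exact pow_le_pow_left₀ (abs_nonneg θ) hθ 2
  linarith [abs_sin_le_abs (x := θ), one_sub_sq_div_two_le_cos (x := θ)]

lemma Complex.three_mul_abs_im_le_re {z : ℂ} (h : |arg z| ≤ π / 10) : 3 * |z.im| ≤ z.re := by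
  rw [← norm_mul_sin_arg, ← norm_mul_cos_arg, abs_mul, abs_norm]
  linarith [mul_le_mul_of_nonneg_left (three_mul_abs_sin_le_cos h) (norm_nonneg z)]

lemma one_sub_sq_add_sq_mul_le_sq {x y : ℝ} (hsec : 3 * |y| ≤ x) (hx : x ≤ 1)
    (hy : |y| ≤ 1 / 10) :
    ((1 - x) ^ 2 + y ^ 2) * (4 + (2 * x + x ^ 2 - y ^ 2)) ^ 2
      ≤ (4 - (2 * x + x ^ 2 - y ^ 2)) ^ 2 := by
  have hx0 : 0 ≤ x := by linarith [abs_nonneg y]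
  have hwx : 9 * y ^ 2 ≤ x ^ 2 := by nlinarith [sq_abs y, abs_nonneg y]
  have hw : y ^ 2 ≤ 1 / 100 := by nlinarith [sq_abs y, abs_nonneg y]
  set w := y ^ 2
  have hw0 : 0 ≤ w := sq_nonneg y
  -- interpolate between the two bounds on `w`: the sector one near `x = 0`, `1/100` near `x = 1`
  have hwmix : w ≤ x ^ 2 * ((1 - x ^ 2) / 9 + 1 / 100) := by
    nlinarith [mul_le_mul_of_nonneg_left hwx (by nlinarith : 0 ≤ 1 - x ^ 2),
      mul_le_mul_of_nonneg_left hw (sq_nonneg x)]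
  have hmix := mul_le_mul_of_nonneg_right hwmix
    (by positivity : 0 ≤ x * (32 + 12 * x + 4 * x ^ 2))
  have hQ : 0 ≤ 8 - 4 * x - 2 * x ^ 2 - x ^ 3
      - ((1 - x ^ 2) / 9 + 1 / 100) * (32 + 12 * x + 4 * x ^ 2) := by
    nlinarith [mul_nonneg hx0 (sub_nonneg.2 hx), pow_nonneg hx0 3, pow_nonneg hx0 4]
  nlinarith [mul_nonneg (pow_nonneg hx0 3) hQ, mul_nonneg hw0 (pow_nonneg hx0 4),
    mul_nonneg (mul_nonneg hw0 hw0) (by linarith : 0 ≤ 8 - w),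
    mul_nonneg (mul_nonneg hw0 hw0) (by positivity : 0 ≤ 6 * x + x ^ 2)]

lemma Complex.re_two_mul_add_sq (z : ℂ) :
    (2 * z + z ^ 2).re = 2 * z.re + z.re ^ 2 - z.im ^ 2 := by
  simp only [sq, add_re, mul_re, re_ofNat, im_ofNat, zero_mul, sub_zero]
  ring

lemma Complex.re_two_mul_add_sq_nonneg {z : ℂ} (hsec : 3 * |z.im| ≤ z.re) :
    0 ≤ (2 * z + z ^ 2).re := by
  rw [re_two_mul_add_sq]
  nlinarith [sq_abs z.im, abs_nonneg z.im]

lemma Complex.norm_one_sub_mul_le {z : ℂ} (hsec : 3 * |z.im| ≤ z.re) (hre : z.re ≤ 1)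
    (him : |z.im| ≤ 1 / 10) :
    ‖1 - z‖ * (4 + (2 * z + z ^ 2).re) ≤ 4 - (2 * z + z ^ 2).re := by
  have hnorm : ‖1 - z‖ ^ 2 = (1 - z.re) ^ 2 + z.im ^ 2 := by
    rw [Complex.sq_norm, normSq_apply]
    simp only [sub_re, one_re, sub_im, one_im]
    ring
  have hu := re_two_mul_add_sq_nonneg hsec
  have hu4 : (2 * z + z ^ 2).re ≤ 4 := by
    rw [re_two_mul_add_sq]
    nlinarith [abs_nonneg z.im]
  rw [← pow_le_pow_iff_left₀ (by positivity) (by linarith) two_ne_zero, mul_pow, hnorm,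
    re_two_mul_add_sq]
  exact one_sub_sq_add_sq_mul_le_sq hsec hre him

/-- For `z ≠ 1` with `|arg z| ≤ π/10`, `|Im z| < 1/10` and `Re z ≤ 1`,
one has `Re(log(1 − z)) ≤ Re(−z − z²/2)`. -/
theorem re_log_one_sub_bound (z : ℂ) (hz1 : z ≠ 1)
    (harg : |Complex.arg z| ≤ Real.pi / 10)
    (him : |z.im| < 1 / 10) (hre : z.re ≤ 1) :
    (Complex.log (1 - z)).re ≤ (-z - z ^ 2 / 2).re := by
  set u := (2 * z + z ^ 2).re with hu_def
  have hsec := Complex.three_mul_abs_im_le_re harg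
  have hu : 0 ≤ u := Complex.re_two_mul_add_sq_nonneg hsec
  have key : ‖1 - z‖ * (4 + u) ≤ 4 - u := Complex.norm_one_sub_mul_le hsec hre him.le
  have hr0 : 0 < ‖1 - z‖ := norm_pos_iff.2 (sub_ne_zero.2 hz1.symm)
  have hr1 : ‖1 - z‖ ≤ 1 := by nlinarith
  calc _ = log ‖1 - z‖ := Complex.log_re _
    _ ≤ 2 * (‖1 - z‖ - 1) / (‖1 - z‖ + 1) := log_le_two_mul_sub_one_div_add_one hr0 hr1
    _ ≤ -u / 2 := by rw [div_le_iff₀ (by positivity)]; linarith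
    _ = _ := by
      rw [hu_def, show -z - z ^ 2 / 2 = -(2 * z + z ^ 2) / 2 by ring, Complex.div_ofNat_re,
        Complex.neg_re]
end

section
/- Let τ ∈ (0,1), let μ ∈ ℂ∖{0} satisfy μ ≠ τ^k for every integer k ≥ 1, and let z ∈ ℂ with |z| > 1. Then the series g₋(z) = ∑_{k=1}^∞ μ·τ^{−k}·z^{−k}/(1 − τ^{−k}·μ) converges absolutely, and it satisfies the functional equation g₋(z) = 1/(1 − z) + μ^{−1}·g₋(z/τ) (note |z/τ| > 1, so g₋(z/τ) is also defined, and |z| > 1 forces z ≠ 1). -/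
/-!
With `w = z⁻¹` the `k`-th term is `μ / (τᵏ - μ) * wᵏ`. The coefficient tends to `-1`, so the
series converges absolutely for `‖w‖ < 1`. Passing from `z` to `z / τ` replaces `w` by `τ w`, and
`μ / (τᵏ - μ) * wᵏ - μ⁻¹ * (μ / (τᵏ - μ) * (τ w)ᵏ) = -wᵏ`, so the functional equation is the
geometric series `-∑_{k ≥ 1} wᵏ = 1 / (1 - z)`.
-/

open Filter

section
variable {K : Type*} [Field K]

-- No hypothesis `tⁿ ≠ μ` is needed: both sides are `0` then, by `x / 0 = 0`.
lemma mul_zpow_neg_div_one_sub_zpow_neg {t : K} (ht : t ≠ 0) (μ z : K) (n : ℕ) :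
    μ * t ^ (-(n : ℤ)) * z ^ (-(n : ℤ)) / (1 - t ^ (-(n : ℤ)) * μ) = μ / (t ^ n - μ) * z⁻¹ ^ n := by
  have htn : (t ^ n)⁻¹ ≠ 0 := inv_ne_zero (pow_ne_zero n ht)
  rw [zpow_neg, zpow_neg, zpow_natCast, zpow_natCast,
    show 1 - (t ^ n)⁻¹ * μ = (t ^ n)⁻¹ * (t ^ n - μ) by field_simp,
    show μ * (t ^ n)⁻¹ * (z ^ n)⁻¹ = (t ^ n)⁻¹ * (μ * z⁻¹ ^ n) by ring,
    mul_div_mul_left _ _ htn, div_mul_eq_mul_div]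

lemma div_pow_sub_mul_pow_eq {t μ : K} (hμ : μ ≠ 0) {n : ℕ} (hn : t ^ n ≠ μ) (w : K) :
    μ / (t ^ n - μ) * w ^ n = -w ^ n + μ⁻¹ * (μ / (t ^ n - μ) * (t * w) ^ n) := by
  have : t ^ n - μ ≠ 0 := sub_ne_zero.mpr hn
  field_simp
  ring
end

section
variable {K : Type*} [NormedField K]

lemma norm_inv_lt_one {z : K} (hz : 1 < ‖z‖) : ‖z⁻¹‖ < 1 := by
  rw [norm_inv]; exact inv_lt_one_of_one_lt₀ hz

lemma summable_norm_div_pow_sub_mul_pow {t μ w : K} (ht : ‖t‖ < 1) (hμ : μ ≠ 0) (hw : ‖w‖ < 1) :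
    Summable (fun n : ℕ => ‖μ / (t ^ n - μ) * w ^ n‖) := by
  have hlim : Tendsto (fun n : ℕ => μ / (t ^ n - μ)) atTop (nhds (μ / (0 - μ))) :=
    tendsto_const_nhds.div ((tendsto_pow_atTop_nhds_zero_of_norm_lt_one ht).sub tendsto_const_nhds)
      (by simpa using hμ)
  exact summable_norm_mul_geometric_of_norm_lt_one' (k := 0) hw (by simpa using hlim.isBigO_one K)

lemma tsum_neg_inv_pow_succ {z : K} (hz : 1 < ‖z‖) :
    ∑' k : ℕ, -(z⁻¹ ^ (k + 1)) = 1 / (1 - z) := by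
  have hz0 : z ≠ 0 := norm_pos_iff.mp (one_pos.trans hz)
  have hz1 : z ≠ 1 := by rintro rfl; simp at hz
  have : z - 1 ≠ 0 := sub_ne_zero.mpr hz1
  have : 1 - z ≠ 0 := sub_ne_zero.mpr hz1.symm
  have hw := norm_inv_lt_one hz
  rw [tsum_neg, geom_series_succ _ hw, tsum_geometric_of_norm_lt_one hw]
  field_simp
  ring

variable [CompleteSpace K]

lemma tsum_div_pow_sub_mul_pow_succ {t μ z : K} (ht : ‖t‖ < 1) (hμ0 : μ ≠ 0)
    (hμ : ∀ k : ℕ, 1 ≤ k → μ ≠ t ^ k) (hz : 1 < ‖z‖) :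
    ∑' k : ℕ, μ / (t ^ (k + 1) - μ) * z⁻¹ ^ (k + 1) =
      1 / (1 - z) + μ⁻¹ * ∑' k : ℕ, μ / (t ^ (k + 1) - μ) * (t * z⁻¹) ^ (k + 1) := by
  have hw := norm_inv_lt_one hz
  have htw : ‖t * z⁻¹‖ < 1 := by
    rw [norm_mul]; exact mul_lt_one_of_nonneg_of_lt_one_left (norm_nonneg _) ht hw.le
  have hgeom : Summable (fun k : ℕ => -(z⁻¹ ^ (k + 1))) :=
    ((summable_nat_add_iff (f := (z⁻¹ ^ ·)) 1).mpr (summable_geometric_of_norm_lt_one hw)).neg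
  have hshift : Summable (fun k : ℕ => μ / (t ^ (k + 1) - μ) * (t * z⁻¹) ^ (k + 1)) :=
    ((summable_nat_add_iff (f := fun n => ‖μ / (t ^ n - μ) * (t * z⁻¹) ^ n‖) 1).mpr
      (summable_norm_div_pow_sub_mul_pow ht hμ0 htw)).of_norm
  calc ∑' k : ℕ, μ / (t ^ (k + 1) - μ) * z⁻¹ ^ (k + 1)
      = ∑' k : ℕ, (-(z⁻¹ ^ (k + 1)) + μ⁻¹ * (μ / (t ^ (k + 1) - μ) * (t * z⁻¹) ^ (k + 1))) :=
        tsum_congr fun k => div_pow_sub_mul_pow_eq hμ0 (hμ (k + 1) k.succ_pos).symm _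
    _ = _ := by
        rw [hgeom.tsum_add (hshift.mul_left μ⁻¹), tsum_mul_left, tsum_neg_inv_pow_succ hz]
end

/-- Absolute convergence of `g₋(z) = ∑_{k=1}^∞ μ·τ^{−k}·z^{−k}/(1 − τ^{−k}·μ)` for `|z| > 1`,
and the functional equation `g₋(z) = 1/(1 − z) + μ⁻¹·g₋(z/τ)`. -/
theorem gminus_functional_equation (τ : ℝ) (hτ : τ ∈ Set.Ioo (0 : ℝ) 1)
    (μ : ℂ) (hμ0 : μ ≠ 0) (hμ : ∀ k : ℕ, 1 ≤ k → μ ≠ (τ : ℂ) ^ k)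
    (z : ℂ) (hz : 1 < ‖z‖) :
    Summable (fun k : ℕ =>
      ‖μ * (τ : ℂ) ^ (-(k + 1 : ℤ)) * z ^ (-(k + 1 : ℤ)) /
        (1 - (τ : ℂ) ^ (-(k + 1 : ℤ)) * μ)‖) ∧
    (∑' k : ℕ, μ * (τ : ℂ) ^ (-(k + 1 : ℤ)) * z ^ (-(k + 1 : ℤ)) /
        (1 - (τ : ℂ) ^ (-(k + 1 : ℤ)) * μ)) =
      1 / (1 - z) +
        μ⁻¹ * ∑' k : ℕ, μ * (τ : ℂ) ^ (-(k + 1 : ℤ)) * (z / (τ : ℂ)) ^ (-(k + 1 : ℤ)) /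
          (1 - (τ : ℂ) ^ (-(k + 1 : ℤ)) * μ) := by
  obtain ⟨hτ0, hτ1⟩ := hτ
  have hτ_ne : (τ : ℂ) ≠ 0 := by exact_mod_cast hτ0.ne'
  have hτ_norm : ‖(τ : ℂ)‖ < 1 := by rwa [Complex.norm_real, Real.norm_of_nonneg hτ0.le]
  have hterm : ∀ (x : ℂ) (k : ℕ), μ * (τ : ℂ) ^ (-(k + 1 : ℤ)) * x ^ (-(k + 1 : ℤ)) /
      (1 - (τ : ℂ) ^ (-(k + 1 : ℤ)) * μ) = μ / ((τ : ℂ) ^ (k + 1) - μ) * x⁻¹ ^ (k + 1) :=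
    fun x k => by exact_mod_cast mul_zpow_neg_div_one_sub_zpow_neg hτ_ne μ x (k + 1)
  simp only [hterm, inv_div, div_eq_mul_inv (τ : ℂ) z]
  exact ⟨(summable_nat_add_iff (f := fun n => ‖μ / ((τ : ℂ) ^ n - μ) * z⁻¹ ^ n‖) 1).mpr
      (summable_norm_div_pow_sub_mul_pow hτ_norm hμ0 (norm_inv_lt_one hz)),
    tsum_div_pow_sub_mul_pow_succ hτ_norm hμ0 hμ hz⟩
end

section
/- Let τ ∈ (0,1), let μ ∈ ℂ satisfy μ·τ^k ≠ 1 for every integer k ≥ 0, and let z ∈ ℂ with |z| < τ^{−1}. Then for every integer N ≥ 1, g₊(z) = ∑_{k=1}^N μ^k/(1 − τ^k·z) + μ^N·g₊(τ^N·z), where all the denominators 1 − τ^k·z (1 ≤ k ≤ N) are nonzero since |τ^k·z| < 1. -/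
/-!
Since `1 / (1 - τ ^ k μ) = 1 + τ ^ k μ / (1 - τ ^ k μ)`, the `k`-th term of `g₊(w)` splits as
`μ (τ w) ^ k` plus `μ` times the `k`-th term of `g₊(τ w)`. Summing the geometric part gives
`g₊(w) = μ / (1 - τ w) + μ g₊(τ w)`, and iterating this `N` times gives the claim.
-/

open Filter Asymptotics

section

variable {𝕜 : Type*} [NormedField 𝕜]

theorem norm_mul_mul_lt_one_of_norm_le_one {τ a w : 𝕜} (ha : ‖a‖ ≤ 1) (hw : ‖τ * w‖ < 1) :
    ‖τ * (a * w)‖ < 1 := by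
  rw [mul_left_comm, norm_mul]
  exact (mul_le_of_le_one_left (norm_nonneg _) ha).trans_lt hw

variable [CompleteSpace 𝕜]

noncomputable def gPlus (τ μ z : 𝕜) : 𝕜 :=
  ∑' k : ℕ, μ * τ ^ k * z ^ k / (1 - τ ^ k * μ)

variable {τ μ w : 𝕜}

theorem summable_gPlus (hτ : ‖τ‖ < 1) (hw : ‖τ * w‖ < 1) :
    Summable fun k : ℕ => μ * τ ^ k * w ^ k / (1 - τ ^ k * μ) := by
  have hden : Tendsto (fun k : ℕ => 1 - τ ^ k * μ) atTop (nhds 1) := by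
    simpa using
      tendsto_const_nhds.sub ((tendsto_pow_atTop_nhds_zero_of_norm_lt_one hτ).mul_const μ)
  have hcoeff := ((hden.inv₀ one_ne_zero).const_mul μ).isBigO_one ℝ
  -- the coefficients `μ / (1 - τ ^ k * μ)` are bounded, so the terms are `O(‖τ w‖ ^ k)`
  refine summable_of_isBigO_nat (summable_geometric_of_lt_one (norm_nonneg _) hw) ?_
  refine ((hcoeff.mul (isBigO_norm_right.mpr (isBigO_refl (fun k => (τ * w) ^ k) _))).congr
    (fun k => ?_) (fun k => ?_))
  · rw [mul_pow, div_eq_mul_inv]; ring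
  · simp

theorem gPlus_eq_div_add_mul (hτ : ‖τ‖ < 1) (hμ : ∀ k : ℕ, μ * τ ^ k ≠ 1) (hw : ‖τ * w‖ < 1) :
    gPlus τ μ w = μ / (1 - τ * w) + μ * gPlus τ μ (τ * w) := by
  have hτw : ‖τ * (τ * w)‖ < 1 := norm_mul_mul_lt_one_of_norm_le_one hτ.le hw
  have hterm : ∀ k : ℕ, μ * τ ^ k * w ^ k / (1 - τ ^ k * μ) =
      μ * (τ * w) ^ k + μ * (μ * τ ^ k * (τ * w) ^ k / (1 - τ ^ k * μ)) := by
    intro k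
    have hne : 1 - τ ^ k * μ ≠ 0 := sub_ne_zero.mpr fun h => hμ k (by rw [mul_comm, ← h])
    rw [mul_div_assoc', div_eq_iff hne, add_mul, div_mul_cancel₀ _ hne]
    ring
  rw [gPlus, gPlus, tsum_congr hterm,
    ((summable_geometric_of_norm_lt_one hw).mul_left μ).tsum_add
      ((summable_gPlus hτ hτw).mul_left μ),
    tsum_mul_left, tsum_mul_left, tsum_geometric_of_norm_lt_one hw, div_eq_mul_inv]

theorem gPlus_eq_sum_add_mul (hτ : ‖τ‖ < 1) (hμ : ∀ k : ℕ, μ * τ ^ k ≠ 1) (hw : ‖τ * w‖ < 1)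
    (N : ℕ) :
    gPlus τ μ w =
      ∑ k ∈ Finset.Icc 1 N, μ ^ k / (1 - τ ^ k * w) + μ ^ N * gPlus τ μ (τ ^ N * w) := by
  induction N with
  | zero => simp
  | succ N ih =>
    have hN : ‖τ * (τ ^ N * w)‖ < 1 :=
      norm_mul_mul_lt_one_of_norm_le_one (by simpa using pow_le_one₀ (norm_nonneg τ) hτ.le) hw
    rw [ih, gPlus_eq_div_add_mul hτ hμ hN, Finset.sum_Icc_succ_top (Nat.le_add_left 1 N),
      ← mul_assoc τ, ← pow_succ']
    ring

end

theorem gplus_iterated_functional_equation_general (τ : ℝ) (hτ : τ ∈ Set.Ioo (0 : ℝ) 1)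
    (μ : ℂ) (hμ : ∀ k : ℕ, μ * (τ : ℂ) ^ k ≠ 1)
    (z : ℂ) (hz : ‖z‖ < τ⁻¹) (N : ℕ) :
    (∑' k : ℕ, μ * (τ : ℂ) ^ k * z ^ k / (1 - (τ : ℂ) ^ k * μ)) =
      (∑ k ∈ Finset.Icc 1 N, μ ^ k / (1 - (τ : ℂ) ^ k * z)) +
        μ ^ N * ∑' k : ℕ, μ * (τ : ℂ) ^ k * ((τ : ℂ) ^ N * z) ^ k /
          (1 - (τ : ℂ) ^ k * μ) := by
  obtain ⟨hτ0, hτ1⟩ := hτ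
  have hτ' : ‖(τ : ℂ)‖ < 1 := by rwa [Complex.norm_real, Real.norm_of_nonneg hτ0.le]
  have hτz : ‖(τ : ℂ) * z‖ < 1 := by
    rw [norm_mul, Complex.norm_real, Real.norm_of_nonneg hτ0.le]
    exact (lt_inv_mul_iff₀ hτ0).mp (by simpa using hz)
  exact gPlus_eq_sum_add_mul hτ' hμ hτz N

/-- Iterated functional equation for `g₊`:
`g₊(z) = ∑_{k=1}^N μ^k/(1 − τ^k·z) + μ^N·g₊(τ^N·z)`. -/
theorem gplus_iterated_functional_equation (τ : ℝ) (hτ : τ ∈ Set.Ioo (0 : ℝ) 1)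
    (μ : ℂ) (hμ : ∀ k : ℕ, μ * (τ : ℂ) ^ k ≠ 1)
    (z : ℂ) (hz : ‖z‖ < τ⁻¹) (N : ℕ) (hN : 1 ≤ N) :
    (∑' k : ℕ, μ * (τ : ℂ) ^ k * z ^ k / (1 - (τ : ℂ) ^ k * μ)) =
      (∑ k ∈ Finset.Icc 1 N, μ ^ k / (1 - (τ : ℂ) ^ k * z)) +
        μ ^ N * ∑' k : ℕ, μ * (τ : ℂ) ^ k * ((τ : ℂ) ^ N * z) ^ k /
          (1 - (τ : ℂ) ^ k * μ) :=
  gplus_iterated_functional_equation_general τ hτ μ hμ z hz N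
end

section
/- Let τ ∈ (0,1), let μ ∈ ℂ∖{0} satisfy μ ≠ τ^k for every integer k ≥ 1, and let z ∈ ℂ with |z| > 1. Then for every integer N ≥ 1, g₋(z) = ∑_{k=0}^{N−1} μ^{−k}/(1 − τ^{−k}·z) + μ^{−N}·g₋(τ^{−N}·z), where all the denominators 1 − τ^{−k}·z (0 ≤ k ≤ N−1) are nonzero since |τ^{−k}·z| > 1. -/
/-!
Writing the `k`-th term of `g₋(z)` as `μ / (τ^(k+1) - μ) · z^(-(k+1))`, the terms of
`g₋(z) - μ⁻¹ g₋(z/τ)` collapse to `-z^(-(k+1))` as soon as `μ ≠ τ^(k+1)`, so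
`g₋(z) = 1/(1 - z) + μ⁻¹ g₋(z/τ)`. Since `|z/τ| > |z| > 1`, this can be iterated `N` times.
-/

open Filter Topology Asymptotics

section

variable {𝕜 : Type*} [NormedField 𝕜] {q μ z : 𝕜}

noncomputable def gMinusTerm (q μ z : 𝕜) (k : ℕ) : 𝕜 :=
  μ * q ^ (-(k + 1 : ℤ)) * z ^ (-(k + 1 : ℤ)) / (1 - q ^ (-(k + 1 : ℤ)) * μ)

noncomputable def gMinus (q μ z : 𝕜) : 𝕜 :=
  ∑' k, gMinusTerm q μ z k

-- No hypothesis on `μ`: when `μ = q ^ (k + 1)` both sides are `0` by the `x / 0 = 0` convention.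
lemma gMinusTerm_eq (hq : q ≠ 0) (μ z : 𝕜) (k : ℕ) :
    gMinusTerm q μ z k = μ / (q ^ (k + 1) - μ) * z⁻¹ ^ (k + 1) := by
  have hn : (-(k + 1 : ℤ)) = -((k + 1 : ℕ) : ℤ) := by push_cast; ring
  have hqn : q ^ (k + 1) ≠ 0 := pow_ne_zero _ hq
  rw [gMinusTerm, hn, zpow_neg, zpow_neg, zpow_natCast, zpow_natCast, inv_pow,
    show 1 - (q ^ (k + 1))⁻¹ * μ = (q ^ (k + 1))⁻¹ * (q ^ (k + 1) - μ) by field_simp,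
    mul_comm μ, mul_assoc, mul_div_mul_left _ _ (inv_ne_zero hqn), div_mul_eq_mul_div]

lemma one_lt_norm_zpow_neg_mul (hq0 : q ≠ 0) (hq : ‖q‖ ≤ 1) (hz : 1 < ‖z‖) (N : ℕ) :
    1 < ‖q ^ (-(N : ℤ)) * z‖ := by
  have h : 1 ≤ ‖q ^ (-(N : ℤ))‖ := by
    rw [norm_zpow, zpow_neg, zpow_natCast]
    exact one_le_inv₀ (by positivity) |>.mpr (pow_le_one₀ (norm_nonneg _) hq)
  rw [norm_mul]
  exact hz.trans_le (le_mul_of_one_le_left (norm_nonneg _) h)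

lemma hasSum_inv_pow_succ (hz : 1 < ‖z‖) : HasSum (fun k : ℕ ↦ z⁻¹ ^ (k + 1)) (z - 1)⁻¹ := by
  have hw : ‖z⁻¹‖ < 1 := by rw [norm_inv]; exact inv_lt_one_of_one_lt₀ hz
  have hz0 : z ≠ 0 := norm_pos_iff.mp (one_pos.trans hz)
  have h := (hasSum_geometric_of_norm_lt_one hw).mul_left z⁻¹
  simp_rw [← pow_succ'] at h
  rwa [← mul_inv, mul_sub, mul_one, mul_inv_cancel₀ hz0] at h

lemma summable_gMinusTerm [CompleteSpace 𝕜] (hq0 : q ≠ 0) (hq : ‖q‖ < 1) (hμ : μ ≠ 0)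
    (hz : 1 < ‖z‖) : Summable (gMinusTerm q μ z) := by
  have hc : Tendsto (fun k : ℕ ↦ μ / (q ^ (k + 1) - μ)) atTop (𝓝 (μ / (0 - μ))) :=
    tendsto_const_nhds.div
      (((tendsto_pow_atTop_nhds_zero_of_norm_lt_one hq).comp (tendsto_add_atTop_nat 1)).sub_const μ)
      (by simpa using hμ)
  rw [funext (gMinusTerm_eq hq0 μ z)]
  have hw : ‖z⁻¹‖ < 1 := by rw [norm_inv]; exact inv_lt_one_of_one_lt₀ hz
  refine summable_of_isBigO_nat
    ((summable_nat_add_iff 1).mpr (summable_geometric_of_lt_one (norm_nonneg _) hw)) ?_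
  simpa using ((hc.isBigO_one 𝕜).mul (isBigO_refl (fun k : ℕ ↦ z⁻¹ ^ (k + 1)) atTop)).norm_right

theorem gMinus_eq_inv_one_sub_add [CompleteSpace 𝕜] (hq0 : q ≠ 0) (hq : ‖q‖ < 1) (hμ0 : μ ≠ 0)
    (hμ : ∀ k : ℕ, 1 ≤ k → μ ≠ q ^ k) (hz : 1 < ‖z‖) :
    gMinus q μ z = (1 - z)⁻¹ + μ⁻¹ * gMinus q μ (q⁻¹ * z) := by
  have hz' : 1 < ‖q⁻¹ * z‖ := by simpa using one_lt_norm_zpow_neg_mul hq0 hq.le hz 1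
  have hterm (k : ℕ) :
      gMinusTerm q μ z k = -z⁻¹ ^ (k + 1) + μ⁻¹ * gMinusTerm q μ (q⁻¹ * z) k := by
    have hden : q ^ (k + 1) - μ ≠ 0 := sub_ne_zero.mpr (hμ (k + 1) k.succ_pos).symm
    rw [gMinusTerm_eq hq0, gMinusTerm_eq hq0, mul_inv, inv_inv, mul_pow]
    field_simp
    ring
  have hsum := (hasSum_inv_pow_succ hz).neg.add
    ((summable_gMinusTerm hq0 hq hμ0 hz').hasSum.mul_left μ⁻¹)
  rw [← funext hterm, neg_inv, neg_sub] at hsum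
  exact hsum.tsum_eq

theorem gMinus_eq_sum_add [CompleteSpace 𝕜] (hq0 : q ≠ 0) (hq : ‖q‖ < 1) (hμ0 : μ ≠ 0)
    (hμ : ∀ k : ℕ, 1 ≤ k → μ ≠ q ^ k) (hz : 1 < ‖z‖) (N : ℕ) :
    gMinus q μ z = ∑ k ∈ Finset.range N, μ ^ (-(k : ℤ)) / (1 - q ^ (-(k : ℤ)) * z) +
      μ ^ (-(N : ℤ)) * gMinus q μ (q ^ (-(N : ℤ)) * z) := by
  induction N with
  | zero => simp
  | succ N ih =>
    have hqN : q⁻¹ * (q ^ (-(N : ℤ)) * z) = q ^ (-((N + 1 : ℕ) : ℤ)) * z := by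
      rw [← mul_assoc, ← zpow_neg_one, ← zpow_add₀ hq0]
      push_cast; ring_nf
    have hμN : μ ^ (-(N : ℤ)) * μ⁻¹ = μ ^ (-((N + 1 : ℕ) : ℤ)) := by
      rw [← zpow_neg_one, ← zpow_add₀ hμ0]
      push_cast; ring_nf
    rw [ih, gMinus_eq_inv_one_sub_add hq0 hq hμ0 hμ (one_lt_norm_zpow_neg_mul hq0 hq.le hz N),
      hqN, mul_add, ← mul_assoc, hμN, Finset.sum_range_succ, div_eq_mul_inv _ (1 - _)]
    ring

end

theorem gminus_iterated_functional_equation_general (τ : ℝ) (hτ : τ ∈ Set.Ioo (0 : ℝ) 1)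
    (μ : ℂ) (hμ0 : μ ≠ 0) (hμ : ∀ k : ℕ, 1 ≤ k → μ ≠ (τ : ℂ) ^ k)
    (z : ℂ) (hz : 1 < ‖z‖) (N : ℕ) :
    (∑' k : ℕ, μ * (τ : ℂ) ^ (-(k + 1 : ℤ)) * z ^ (-(k + 1 : ℤ)) /
        (1 - (τ : ℂ) ^ (-(k + 1 : ℤ)) * μ)) =
      (∑ k ∈ Finset.range N, μ ^ (-(k : ℤ)) / (1 - (τ : ℂ) ^ (-(k : ℤ)) * z)) +
        μ ^ (-(N : ℤ)) *
          ∑' k : ℕ, μ * (τ : ℂ) ^ (-(k + 1 : ℤ)) *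
            ((τ : ℂ) ^ (-(N : ℤ)) * z) ^ (-(k + 1 : ℤ)) /
            (1 - (τ : ℂ) ^ (-(k + 1 : ℤ)) * μ) := by
  have hτ0 : (τ : ℂ) ≠ 0 := Complex.ofReal_ne_zero.mpr hτ.1.ne'
  have hτ1 : ‖(τ : ℂ)‖ < 1 := by
    rw [Complex.norm_real, Real.norm_of_nonneg hτ.1.le]
    exact hτ.2
  exact gMinus_eq_sum_add hτ0 hτ1 hμ0 hμ hz N

/-- Iterated functional equation for `g₋`:
`g₋(z) = ∑_{k=0}^{N−1} μ^{−k}/(1 − τ^{−k}·z) + μ^{−N}·g₋(τ^{−N}·z)`. -/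
theorem gminus_iterated_functional_equation (τ : ℝ) (hτ : τ ∈ Set.Ioo (0 : ℝ) 1)
    (μ : ℂ) (hμ0 : μ ≠ 0) (hμ : ∀ k : ℕ, 1 ≤ k → μ ≠ (τ : ℂ) ^ k)
    (z : ℂ) (hz : 1 < ‖z‖) (N : ℕ) (hN : 1 ≤ N) :
    (∑' k : ℕ, μ * (τ : ℂ) ^ (-(k + 1 : ℤ)) * z ^ (-(k + 1 : ℤ)) /
        (1 - (τ : ℂ) ^ (-(k + 1 : ℤ)) * μ)) =
      (∑ k ∈ Finset.range N, μ ^ (-(k : ℤ)) / (1 - (τ : ℂ) ^ (-(k : ℤ)) * z)) +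
        μ ^ (-(N : ℤ)) *
          ∑' k : ℕ, μ * (τ : ℂ) ^ (-(k + 1 : ℤ)) *
            ((τ : ℂ) ^ (-(N : ℤ)) * z) ^ (-(k + 1 : ℤ)) /
            (1 - (τ : ℂ) ^ (-(k + 1 : ℤ)) * μ) :=
  gminus_iterated_functional_equation_general τ hτ μ hμ0 hμ z hz N
end

section
/- There exists a constant C > 0 such that for all real r > 0 and all θ ∈ [−3π/4, 3π/4], |Γ(r·e^{iθ})| ≤ C·Γ(r), where on the left Γ is the complex Gamma function and on the right Γ(r) is the (positive) real Gamma function. -/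
/-!
Shifting `z` by `n` multiplies `Γ z` by `∏ₖ (z + k)`, and in the sector `Re z ≥ -(3/4)‖z‖` every
factor satisfies `‖z‖ + k ≤ 3 ‖z + k‖`. Comparing with the same shift of `Γ ‖z‖` gives
`‖Γ z‖ / Γ ‖z‖ ≤ 3ⁿ Γ(Re z + n) / Γ(‖z‖ + n)`. When `Re z` is bounded below a fixed `n` makes
`Re z + n ≥ 2`, where `Γ` is monotone; when `Re z` is very negative, `n ≈ ‖z‖` makes
`Γ(‖z‖ + n)` exceed `Γ(Re z + n)` by a factor of roughly `(‖z‖/4)^‖z‖`, which beats `3ⁿ`.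
-/

open Real Set

theorem Real.neg_three_quarters_le_cos {θ : ℝ} (hθ : |θ| ≤ 3 * π / 4) : -(3 / 4) ≤ cos θ := by
  have hcos : cos (3 * π / 4) ≤ cos θ := by
    rw [← cos_abs θ]
    exact cos_le_cos_of_nonneg_of_le_pi (abs_nonneg θ) (by linarith [pi_pos]) hθ
  have hval : cos (3 * π / 4) = -(√2 / 2) := by
    rw [show 3 * π / 4 = π - π / 4 by ring, cos_pi_sub, cos_pi_div_four]
  linarith [sqrt_two_lt_three_halves]

theorem Real.pow_mul_Gamma_le_Gamma_add_nat {a : ℝ} (ha : 0 < a) (m : ℕ) :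
    a ^ m * Gamma a ≤ Gamma (a + m) := by
  induction m with
  | zero => simp
  | succ m ih =>
    rw [Nat.cast_succ, ← add_assoc, Gamma_add_one (by positivity), pow_succ]
    calc a ^ m * a * Gamma a = a * (a ^ m * Gamma a) := by ring
      _ ≤ (a + m) * Gamma (a + m) := by gcongr; linarith [m.cast_nonneg (α := ℝ)]

namespace Complex

theorem norm_Gamma_le_Gamma_re {w : ℂ} (hw : 0 < w.re) : ‖Gamma w‖ ≤ Real.Gamma w.re := by
  rw [Gamma_eq_integral hw, Real.Gamma_eq_integral hw]
  refine (MeasureTheory.norm_integral_le_integral_norm _).trans_eq <|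
    MeasureTheory.setIntegral_congr_fun measurableSet_Ioi fun x hx => ?_
  simp [norm_cpow_eq_rpow_re_of_pos hx, - ofReal_neg, norm_exp_ofReal]

section Sector

variable {z : ℂ} (hz : -(3 / 4) * ‖z‖ ≤ z.re)
include hz

theorem norm_add_le_three_mul_norm_add_ofReal {k : ℝ} (hk : 0 ≤ k) :
    ‖z‖ + k ≤ 3 * ‖z + k‖ := by
  have hsq : ‖z + k‖ ^ 2 = ‖z‖ ^ 2 + 2 * k * z.re + k ^ 2 := by
    rw [Complex.sq_norm, Complex.sq_norm, normSq_apply, normSq_apply]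
    simp only [add_re, ofReal_re, add_im, ofReal_im, add_zero]
    ring
  refine (pow_le_pow_iff_left₀ (by positivity) (by positivity) two_ne_zero).mp ?_
  nlinarith [sq_nonneg (‖z‖ - k), mul_nonneg (norm_nonneg z) hk]

theorem norm_Gamma_mul_Gamma_norm_add_nat_le (hz0 : z ≠ 0) (n : ℕ) :
    ‖Gamma z‖ * Real.Gamma (‖z‖ + n) ≤ 3 ^ n * ‖Gamma (z + n)‖ * Real.Gamma ‖z‖ := by
  induction n with
  | zero => simp
  | succ n ih =>
    have hbound : ‖z‖ + n ≤ 3 * ‖z + n‖ := by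
      simpa using norm_add_le_three_mul_norm_add_ofReal hz n.cast_nonneg
    have hzn : z + n ≠ 0 := by
      intro h
      rw [h, norm_zero] at hbound
      linarith [norm_pos_iff.mpr hz0, n.cast_nonneg (α := ℝ)]
    have hpos : 0 < ‖z‖ + n := by positivity
    rw [Nat.cast_succ, Nat.cast_succ, ← add_assoc, ← add_assoc, Real.Gamma_add_one hpos.ne',
      Gamma_add_one _ hzn, norm_mul]
    calc ‖Gamma z‖ * ((‖z‖ + n) * Real.Gamma (‖z‖ + n))
        = (‖z‖ + n) * (‖Gamma z‖ * Real.Gamma (‖z‖ + n)) := by ring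
      _ ≤ 3 * ‖z + n‖ * (3 ^ n * ‖Gamma (z + n)‖ * Real.Gamma ‖z‖) := by gcongr
      _ = 3 ^ (n + 1) * (‖z + n‖ * ‖Gamma (z + n)‖) * Real.Gamma ‖z‖ := by ring

theorem norm_Gamma_le_pow_mul_Gamma_norm (hz0 : z ≠ 0) {n : ℕ} (hn : 2 ≤ z.re + n) :
    ‖Gamma z‖ ≤ 3 ^ n * Real.Gamma ‖z‖ := by
  have hshift : ‖Gamma (z + n)‖ ≤ Real.Gamma (‖z‖ + n) :=
    calc ‖Gamma (z + n)‖ ≤ Real.Gamma (z.re + n) := by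
          simpa using norm_Gamma_le_Gamma_re (w := z + n) (by simp; linarith)
      _ ≤ Real.Gamma (‖z‖ + n) := Real.Gamma_strictMonoOn_Ici.monotoneOn hn
          (mem_Ici.mpr (by linarith [re_le_norm z])) (by linarith [re_le_norm z])
  have hpos : 0 < Real.Gamma (‖z‖ + n) := Real.Gamma_pos_of_pos (by positivity)
  refine le_of_mul_le_mul_right ?_ hpos
  calc ‖Gamma z‖ * Real.Gamma (‖z‖ + n) ≤ 3 ^ n * ‖Gamma (z + n)‖ * Real.Gamma ‖z‖ :=
        norm_Gamma_mul_Gamma_norm_add_nat_le hz hz0 n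
    _ ≤ 3 ^ n * Real.Gamma (‖z‖ + n) * Real.Gamma ‖z‖ := by gcongr
    _ = 3 ^ n * Real.Gamma ‖z‖ * Real.Gamma (‖z‖ + n) := by ring

theorem norm_Gamma_le_Gamma_norm_of_re_le (hre : z.re ≤ -24) : ‖Gamma z‖ ≤ Real.Gamma ‖z‖ := by
  have hs : 32 ≤ ‖z‖ := by linarith
  have hz0 : z ≠ 0 := by rintro rfl; norm_num at hs
  set m := ⌊‖z‖⌋₊
  have hm_le : (m : ℝ) ≤ ‖z‖ := Nat.floor_le (norm_nonneg z)
  have hm_gt : ‖z‖ < m + 1 := Nat.lt_floor_add_one ‖z‖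
  have hm : 2 ≤ m := Nat.le_floor (by push_cast; linarith)
  set a := z.re + ((m + 2 : ℕ) : ℝ)
  have ha : 9 ≤ a := by push_cast [a]; linarith
  have hgrowth : 3 ^ (m + 2) * Real.Gamma a ≤ Real.Gamma (‖z‖ + (m + 2 : ℕ)) :=
    calc 3 ^ (m + 2) * Real.Gamma a ≤ a ^ m * Real.Gamma a := by
          gcongr
          calc (3 : ℝ) ^ (m + 2) ≤ 3 ^ (2 * m) := pow_le_pow_right₀ (by norm_num) (by omega)
            _ = 9 ^ m := by rw [pow_mul]; norm_num
            _ ≤ a ^ m := by gcongr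
      _ ≤ Real.Gamma (a + m) := Real.pow_mul_Gamma_le_Gamma_add_nat (by linarith) m
      _ ≤ Real.Gamma (‖z‖ + (m + 2 : ℕ)) := Real.Gamma_strictMonoOn_Ici.monotoneOn
          (by simp only [mem_Ici]; linarith [m.cast_nonneg (α := ℝ)])
          (by simp only [mem_Ici]; linarith) (by push_cast [a]; linarith)
  have hpos : 0 < Real.Gamma (‖z‖ + (m + 2 : ℕ)) := Real.Gamma_pos_of_pos (by positivity)
  refine le_of_mul_le_mul_right ?_ hpos
  calc ‖Gamma z‖ * Real.Gamma (‖z‖ + (m + 2 : ℕ))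
      ≤ 3 ^ (m + 2) * ‖Gamma (z + (m + 2 : ℕ))‖ * Real.Gamma ‖z‖ :=
        norm_Gamma_mul_Gamma_norm_add_nat_le hz hz0 (m + 2)
    _ ≤ 3 ^ (m + 2) * Real.Gamma a * Real.Gamma ‖z‖ := by
        gcongr
        simpa [a] using norm_Gamma_le_Gamma_re (w := z + (m + 2 : ℕ)) (by simp; linarith)
    _ ≤ Real.Gamma (‖z‖ + (m + 2 : ℕ)) * Real.Gamma ‖z‖ := by gcongr
    _ = Real.Gamma ‖z‖ * Real.Gamma (‖z‖ + (m + 2 : ℕ)) := by ring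

end Sector

end Complex

open Complex in
/-- There is a constant `C > 0` such that `|Γ(r·e^{iθ})| ≤ C·Γ(r)` for all `r > 0`
and `θ ∈ [−3π/4, 3π/4]`. -/
theorem gamma_arc_bound :
    ∃ C > (0 : ℝ), ∀ r : ℝ, 0 < r → ∀ θ : ℝ,
      θ ∈ Set.Icc (-(3 * Real.pi / 4)) (3 * Real.pi / 4) →
      ‖Complex.Gamma ((r : ℂ) * Complex.exp ((θ : ℂ) * Complex.I))‖ ≤
        C * Real.Gamma r := by
  refine ⟨3 ^ 26, by positivity, fun r hr θ hθ => ?_⟩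
  set z := (r : ℂ) * exp (θ * I)
  have hnorm : ‖z‖ = r := by simp [z, norm_exp_ofReal_mul_I, hr.le]
  have hz0 : z ≠ 0 := norm_pos_iff.mp (hnorm ▸ hr)
  have hz : -(3 / 4) * ‖z‖ ≤ z.re := by
    have hcos := neg_three_quarters_le_cos (abs_le.mpr hθ)
    rw [hnorm, re_ofReal_mul, exp_ofReal_mul_I_re]
    nlinarith
  rw [← hnorm]
  rcases le_or_gt z.re (-24) with hfar | hnear
  · exact (norm_Gamma_le_Gamma_norm_of_re_le hz hfar).trans
      (le_mul_of_one_le_left (Real.Gamma_pos_of_pos (norm_pos_iff.mpr hz0)).le (by norm_num))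
  · exact norm_Gamma_le_pow_mul_Gamma_norm hz hz0 (by push_cast; linarith)
end

section
/- There exists a constant C > 0 such that for all real r > 0, |Γ(r·e^{3πi/4})| ≤ C/r, where Γ is the complex Gamma function. -/
/-!
Write `z = -a + ia` with `a = r/√2` and shift it by `n = ⌊a⌋₊ + 2`, so that `Re (z + n) ∈ [1, 2]`.
There Euler's integral gives `‖Γ (z + n)‖ ≤ Γ (Re (z + n))`, and log-convexity of the real `Γ`
with `Γ 1 = Γ 2 = 1` bounds this by `1`. The functional equation
`Γ (z + n) = z (z + 1) ⋯ (z + n - 1) Γ z` then gives the bound, since in the sector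
`|Re z| ≤ |Im z|` every factor satisfies `‖z + k‖ ≥ k / √2`.
-/

open Finset

theorem Real.Gamma_le_one_of_mem_Icc {x : ℝ} (hx : x ∈ Set.Icc 1 2) : Real.Gamma x ≤ 1 := by
  simpa [Real.Gamma_one, Real.Gamma_two] using
    Real.convexOn_Gamma.le_max_of_mem_Icc (by norm_num : (1 : ℝ) ∈ Set.Ioi 0)
      (by norm_num : (2 : ℝ) ∈ Set.Ioi 0) hx

namespace Complex

theorem norm_Gamma_le_Gamma_re_s10 {s : ℂ} (hs : 0 < s.re) : ‖Gamma s‖ ≤ Real.Gamma s.re := by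
  rw [Gamma_eq_integral hs, Real.Gamma_eq_integral hs, GammaIntegral]
  refine (MeasureTheory.norm_integral_le_integral_norm _).trans_eq
    (MeasureTheory.setIntegral_congr_fun measurableSet_Ioi fun x (hx : 0 < x) => ?_)
  rw [norm_mul, norm_real, Real.norm_of_nonneg (Real.exp_pos _).le,
    norm_cpow_eq_rpow_re_of_pos hx, sub_re, one_re]

theorem Gamma_add_nat_eq_prod_mul {z : ℂ} (hz : ∀ k : ℕ, z + k ≠ 0) (n : ℕ) :
    Gamma (z + n) = (∏ k ∈ range n, (z + k)) * Gamma z := by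
  induction n with
  | zero => simp
  | succ n ih =>
    rw [Nat.cast_succ, ← add_assoc, Gamma_add_one _ (hz n), ih, prod_range_succ]
    ring

theorem sq_le_two_mul_norm_add_ofReal_sq {z : ℂ} (hz : |z.re| ≤ |z.im|) (t : ℝ) :
    t ^ 2 ≤ 2 * ‖z + t‖ ^ 2 := by
  rw [Complex.sq_norm, normSq_apply]
  simp only [add_re, ofReal_re, add_im, ofReal_im, add_zero]
  have : z.re ^ 2 ≤ z.im ^ 2 := sq_le_sq.mpr hz
  nlinarith [sq_nonneg (t + 2 * z.re)]

theorem norm_le_sqrt_two_mul_prod_norm_add_nat {z : ℂ} (hz : |z.re| ≤ |z.im|) (m : ℕ) :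
    ‖z‖ ≤ √2 * ∏ k ∈ range (m + 2), ‖z + k‖ := by
  have hsq (k : ℕ) : (k : ℝ) ^ 2 ≤ 2 * ‖z + k‖ ^ 2 := by
    exact_mod_cast sq_le_two_mul_norm_add_ofReal_sq hz k
  have h_one : 1 ≤ √2 * ‖z + 1‖ := by
    have h := hsq 1
    have h2 : (√2 * ‖z + 1‖) ^ 2 = 2 * ‖z + 1‖ ^ 2 := by
      rw [mul_pow, Real.sq_sqrt zero_le_two]
    push_cast at h
    nlinarith [mul_nonneg (Real.sqrt_nonneg 2) (norm_nonneg (z + 1))]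
  have h_tail : 1 ≤ ∏ k ∈ range m, ‖z + ↑(k + 1 + 1)‖ := by
    refine one_le_prod fun k _ => ?_
    have h := hsq (k + 1 + 1)
    push_cast at h ⊢
    nlinarith [norm_nonneg (z + (k + 1 + 1)), (Nat.cast_nonneg k : (0 : ℝ) ≤ k)]
  rw [prod_range_succ', prod_range_succ', Nat.cast_zero, add_zero, zero_add, Nat.cast_one]
  calc ‖z‖ = 1 * 1 * ‖z‖ := by ring
    _ ≤ (∏ k ∈ range m, ‖z + ↑(k + 1 + 1)‖) * (√2 * ‖z + 1‖) * ‖z‖ := by gcongr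
    _ = _ := by ring

theorem norm_Gamma_le_of_abs_re_le_abs_im {z : ℂ} (hre : z.re ≤ 0) (hz : |z.re| ≤ |z.im|) :
    ‖Gamma z‖ ≤ √2 / ‖z‖ := by
  rcases eq_or_ne z 0 with rfl | hz0
  · simp
  set m := ⌊-z.re⌋₊
  have hz_pos : 0 < ‖z‖ := norm_pos_iff.mpr hz0
  have hz_add (k : ℕ) : z + k ≠ 0 := by
    intro h
    rw [eq_neg_of_add_eq_zero_left h] at hz hz0
    simp_all
  have h_shift : (z + ↑(m + 2)).re ∈ Set.Icc 1 2 := by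
    have h1 := Nat.floor_le (neg_nonneg.mpr hre)
    have h2 := Nat.lt_floor_add_one (-z.re)
    rw [add_re, natCast_re, Nat.cast_add, Nat.cast_two]
    constructor <;> linarith
  have h_shifted : ‖Gamma (z + ↑(m + 2))‖ ≤ 1 :=
    (norm_Gamma_le_Gamma_re_s10 (by linarith [h_shift.1])).trans
      (Real.Gamma_le_one_of_mem_Icc h_shift)
  rw [Gamma_add_nat_eq_prod_mul hz_add, norm_mul, norm_prod] at h_shifted
  rw [le_div_iff₀ hz_pos]
  calc ‖Gamma z‖ * ‖z‖ ≤ ‖Gamma z‖ * (√2 * ∏ k ∈ range (m + 2), ‖z + k‖) := by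
        gcongr; exact norm_le_sqrt_two_mul_prod_norm_add_nat hz m
    _ = √2 * ((∏ k ∈ range (m + 2), ‖z + k‖) * ‖Gamma z‖) := by ring
    _ ≤ √2 * 1 := by gcongr
    _ = √2 := mul_one _

end Complex

/-- There is a constant `C > 0` such that `|Γ(r·e^{3πi/4})| ≤ C/r` for all `r > 0`. -/
theorem gamma_ray_bound :
    ∃ C > (0 : ℝ), ∀ r : ℝ, 0 < r →
      ‖Complex.Gamma ((r : ℂ) *
          Complex.exp ((3 * Real.pi / 4 : ℝ) * Complex.I))‖ ≤ C / r := by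
  refine ⟨√2, by positivity, fun r hr => ?_⟩
  set z : ℂ := r * Complex.exp ((3 * Real.pi / 4 : ℝ) * Complex.I)
  have h_angle : 3 * Real.pi / 4 = Real.pi - Real.pi / 4 := by ring
  have h_re : z.re = -(r * (√2 / 2)) := by
    rw [Complex.re_ofReal_mul, Complex.exp_ofReal_mul_I_re, h_angle, Real.cos_pi_sub,
      Real.cos_pi_div_four, mul_neg]
  have h_im : z.im = r * (√2 / 2) := by
    rw [Complex.im_ofReal_mul, Complex.exp_ofReal_mul_I_im, h_angle, Real.sin_pi_sub,
      Real.sin_pi_div_four]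
  have h_norm : ‖z‖ = r := by
    rw [norm_mul, Complex.norm_exp_ofReal_mul_I, Complex.norm_of_nonneg hr.le, mul_one]
  rw [← h_norm]
  refine Complex.norm_Gamma_le_of_abs_re_le_abs_im ?_ ?_
  · rw [h_re, neg_nonpos]; positivity
  · rw [h_re, h_im, abs_neg]
end

section
/- For every real constant c > π/2 there exists a constant C > 0 such that for all z ∈ ℂ with Re(z) ≥ 0, |1/Γ(z)| ≤ C·exp(c·|z|), where Γ is the complex Gamma function (at z = 0, where Γ(0) = 0 by convention, the left-hand side is interpreted as 0). -/
/-!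
By the functional equation `1/Γ(z) = z/Γ(z+1)` it suffices to bound `1/Γ(w)` for `Re w ≥ 1`.
Compare Euler's limit `Γ(w) = lim nʷ n!/∏_{j ≤ n} (w+j)` with the same limit at the real point
`u = Re w`, and let `y = Im w`. Factor `j` contributes
`|w+j|²/(u+j)² = 1 + y²/(u+j)² ≤ 1 + y²/(j+1)²`, and by Euler's product for `sinh` these
factors multiply to at most `sinh(π|y|)/(π|y|) ≤ e^{π|y|}`. Hence `|1/Γ(w)| ≤ e^{π|y|/2}/Γ(u)`.
Also `1/Γ(x+1) ≤ x+1`, because `Γ ≥ 1` on `[2, ∞)`. The resulting polynomial factor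
`|z|(|z|+1)` is absorbed into `e^{(c-π/2)|z|}`.
-/

open Filter Finset Real
open scoped Topology Nat

namespace Real

open Complex in
theorem tendsto_euler_sinh_prod (t : ℝ) :
    Tendsto (fun n : ℕ => π * t * ∏ k ∈ range n, (1 + t ^ 2 / ((k : ℝ) + 1) ^ 2)) atTop
      (𝓝 (sinh (π * t))) := by
  have h := Complex.tendsto_euler_sin_prod (I * t)
  have hsin : Complex.sin (π * (I * t)) = (sinh (π * t) : ℂ) * I := by
    rw [show (π : ℂ) * (I * t) = ((π * t : ℝ) : ℂ) * I by push_cast; ring, sin_mul_I,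
      ofReal_sinh]
  have hprod (n : ℕ) : (π : ℂ) * (I * t) * ∏ k ∈ range n, (1 - (I * t) ^ 2 / ((k : ℂ) + 1) ^ 2)
      = ((π * t * ∏ k ∈ range n, (1 + t ^ 2 / ((k : ℝ) + 1) ^ 2) : ℝ) : ℂ) * I := by
    push_cast
    rw [prod_congr rfl fun k _ => by rw [mul_pow, I_sq, neg_one_mul, neg_div, sub_neg_eq_add]]
    ring
  simp only [hprod, hsin] at h
  rw [← tendsto_ofReal_iff]
  simpa [mul_assoc] using h.mul_const (-I)

theorem sinh_le_mul_exp (v : ℝ) : sinh v ≤ v * exp v := by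
  have h := add_one_le_exp (-(2 * v))
  have hexp : exp (-v) = exp v * exp (-(2 * v)) := by rw [← exp_add]; ring_nf
  rw [sinh_eq, hexp]
  nlinarith [exp_pos v]

theorem prod_one_add_sq_div_sq_le_exp (t : ℝ) (n : ℕ) :
    ∏ k ∈ range n, (1 + t ^ 2 / ((k : ℝ) + 1) ^ 2) ≤ exp (π * |t|) := by
  rw [← sq_abs t]
  rcases (abs_nonneg t).eq_or_lt with ht | ht
  · simp [← ht]
  set s := |t|
  have hmono : Monotone fun n : ℕ => ∏ k ∈ range n, (1 + s ^ 2 / ((k : ℝ) + 1) ^ 2) :=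
    monotone_nat_of_le_succ fun n => by
      rw [prod_range_succ]
      exact le_mul_of_one_le_right (prod_nonneg fun _ _ => by positivity)
        (le_add_of_nonneg_right (by positivity))
  have hπs : 0 < π * s := by positivity
  refine le_of_mul_le_mul_left ?_ hπs
  calc π * s * ∏ k ∈ range n, (1 + s ^ 2 / ((k : ℝ) + 1) ^ 2)
      ≤ sinh (π * s) :=
        ((hmono.const_mul hπs.le).ge_of_tendsto (tendsto_euler_sinh_prod s) n)
    _ ≤ π * s * exp (π * s) := sinh_le_mul_exp _

theorem inv_Gamma_add_one_le {x : ℝ} (hx : 0 ≤ x) : (Gamma (x + 1))⁻¹ ≤ x + 1 := by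
  have hΓ : Gamma 2 ≤ Gamma (x + 1 + 1) :=
    Gamma_strictMonoOn_Ici.monotoneOn (by simp) (by simp; linarith) (by linarith)
  rw [Gamma_two, Gamma_add_one (by positivity)] at hΓ
  rw [inv_le_iff_one_le_mul₀ (Gamma_pos_of_pos (by positivity))]
  exact hΓ

theorem le_exp_mul_div {ε : ℝ} (hε : 0 < ε) (r : ℝ) : r ≤ exp (ε * r) / ε := by
  rw [le_div_iff₀ hε]
  linarith [add_one_le_exp (ε * r)]

end Real

namespace Complex

theorem norm_GammaSeq (w : ℂ) {n : ℕ} (hn : 0 < n) :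
    ‖GammaSeq w n‖ = n ^ w.re * n ! / ∏ j ∈ range (n + 1), ‖w + j‖ := by
  rw [GammaSeq, norm_div, norm_mul, norm_prod, norm_natCast_cpow_of_pos hn, norm_natCast]

theorem norm_add_natCast_sq_le {w : ℂ} (hw : 1 ≤ w.re) (j : ℕ) :
    ‖w + j‖ ^ 2 ≤ (w.re + j) ^ 2 * (1 + w.im ^ 2 / ((j : ℝ) + 1) ^ 2) := by
  have hnorm : ‖w + j‖ ^ 2 = (w.re + j) ^ 2 + w.im ^ 2 := by
    rw [Complex.sq_norm, normSq_apply]; simp only [add_re, natCast_re, add_im, natCast_im, add_zero]; ring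
  have hj : ((j : ℝ) + 1) ^ 2 ≤ (w.re + j) ^ 2 := pow_le_pow_left₀ (by positivity) (by linarith) 2
  rw [hnorm, mul_one_add, ← mul_div_assoc]
  gcongr
  rw [le_div_iff₀ (by positivity)]
  nlinarith [sq_nonneg w.im]

theorem GammaSeq_re_sq_le {w : ℂ} (hw : 1 ≤ w.re) {n : ℕ} (hn : 0 < n) :
    Real.GammaSeq w.re n ^ 2 ≤
      ‖GammaSeq w n‖ ^ 2 * ∏ j ∈ range (n + 1), (1 + w.im ^ 2 / ((j : ℝ) + 1) ^ 2) := by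
  have hprod : (∏ j ∈ range (n + 1), ‖w + j‖) ^ 2 ≤
      (∏ j ∈ range (n + 1), (w.re + j)) ^ 2 *
        ∏ j ∈ range (n + 1), (1 + w.im ^ 2 / ((j : ℝ) + 1) ^ 2) := by
    rw [← prod_pow, ← prod_pow, ← prod_mul_distrib]
    exact prod_le_prod (fun _ _ => by positivity) fun j _ => norm_add_natCast_sq_le hw j
  have hre : 0 < ∏ j ∈ range (n + 1), (w.re + j) := prod_pos fun _ _ => by positivity
  have hnorm : 0 < ∏ j ∈ range (n + 1), ‖w + j‖ :=
    prod_pos fun j _ => norm_pos_iff.mpr fun h => by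
      simpa [h] using (zero_lt_one.trans_le hw).trans_le (by simp : w.re ≤ (w + j).re)
  rw [Real.GammaSeq, norm_GammaSeq w hn, div_pow, div_pow, div_mul_eq_mul_div,
    div_le_div_iff₀ (by positivity) (by positivity), mul_assoc]
  exact mul_le_mul_of_nonneg_left (hprod.trans_eq (mul_comm _ _)) (by positivity)

theorem norm_inv_Gamma_le_of_one_le_re {w : ℂ} (hw : 1 ≤ w.re) :
    ‖(Gamma w)⁻¹‖ ≤ (Real.Gamma w.re)⁻¹ * Real.exp (π / 2 * |w.im|) := by
  have hsq : Real.Gamma w.re ^ 2 ≤ ‖Gamma w‖ ^ 2 * Real.exp (π * |w.im|) := by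
    refine le_of_tendsto_of_tendsto ((Real.GammaSeq_tendsto_Gamma w.re).pow 2)
      (((GammaSeq_tendsto_Gamma w).norm.pow 2).mul_const _) ?_
    filter_upwards [eventually_gt_atTop 0] with n hn
    exact (GammaSeq_re_sq_le hw hn).trans
      (mul_le_mul_of_nonneg_left (Real.prod_one_add_sq_div_sq_le_exp _ _) (by positivity))
  have hΓ : 0 < Real.Gamma w.re := Real.Gamma_pos_of_pos (by linarith)
  have hle : Real.Gamma w.re ≤ ‖Gamma w‖ * Real.exp (π / 2 * |w.im|) := by
    have hexp : Real.exp (π / 2 * |w.im|) ^ 2 = Real.exp (π * |w.im|) := by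
      rw [← Real.exp_nat_mul]; ring_nf
    rwa [← pow_le_pow_iff_left₀ hΓ.le (by positivity) two_ne_zero, mul_pow, hexp]
  have hpos : 0 < ‖Gamma w‖ := norm_pos_iff.mpr (Gamma_ne_zero_of_re_pos (by linarith))
  rwa [norm_inv, inv_mul_eq_div, le_div_iff₀ hΓ, inv_mul_le_iff₀ hpos]

theorem norm_inv_Gamma_le {z : ℂ} (hz : 0 ≤ z.re) :
    ‖(Gamma z)⁻¹‖ ≤ ‖z‖ * (‖z‖ + 1) * Real.exp (π / 2 * ‖z‖) := by
  rcases eq_or_ne z 0 with rfl | hz0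
  · simp
  have hw : 1 ≤ (z + 1).re := by simpa using hz
  calc ‖(Gamma z)⁻¹‖ = ‖z * (Gamma (z + 1))⁻¹‖ := by
        rw [Gamma_add_one z hz0, mul_inv, ← mul_assoc, mul_inv_cancel₀ hz0, one_mul]
    _ = ‖z‖ * ‖(Gamma (z + 1))⁻¹‖ := norm_mul _ _
    _ ≤ ‖z‖ * ((Real.Gamma (z.re + 1))⁻¹ * Real.exp (π / 2 * |z.im|)) := by
        simpa using mul_le_mul_of_nonneg_left (norm_inv_Gamma_le_of_one_le_re hw) (norm_nonneg z)
    _ ≤ ‖z‖ * ((‖z‖ + 1) * Real.exp (π / 2 * ‖z‖)) := by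
        gcongr
        · exact (Real.inv_Gamma_add_one_le hz).trans (by linarith [re_le_norm z])
        · exact abs_im_le_norm z
    _ = ‖z‖ * (‖z‖ + 1) * Real.exp (π / 2 * ‖z‖) := by ring

end Complex

/-- For any `c > π/2` there is `C > 0` with `|1/Γ(z)| ≤ C·exp(c·|z|)` for all `z`
with `Re(z) ≥ 0`. -/
theorem inverse_gamma_bound (c : ℝ) (hc : Real.pi / 2 < c) :
    ∃ C > (0 : ℝ), ∀ z : ℂ, 0 ≤ z.re →
      ‖(Complex.Gamma z)⁻¹‖ ≤ C * Real.exp (c * ‖z‖) := by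
  set δ := (c - π / 2) / 2
  have hδ : 0 < δ := by simp only [δ]; linarith
  refine ⟨δ⁻¹ * (δ⁻¹ + 1), by positivity, fun z hz => ?_⟩
  set r := ‖z‖
  have hr : r ≤ exp (δ * r) / δ := le_exp_mul_div hδ r
  have hr1 : r + 1 ≤ exp (δ * r) / δ + exp (δ * r) := by
    gcongr; exact one_le_exp (by positivity)
  have hexp : exp (c * r) = exp (δ * r) * exp (δ * r) * exp (π / 2 * r) := by
    rw [← exp_add, ← exp_add]; congr 1; simp only [δ]; ring
  calc ‖(Complex.Gamma z)⁻¹‖ ≤ r * (r + 1) * exp (π / 2 * r) := Complex.norm_inv_Gamma_le hz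
    _ ≤ exp (δ * r) / δ * (exp (δ * r) / δ + exp (δ * r)) * exp (π / 2 * r) := by gcongr
    _ = δ⁻¹ * (δ⁻¹ + 1) * exp (c * r) := by rw [hexp]; ring
end

section
/- Let μ ∈ ℂ with |μ| < 1, and let z ∈ ℂ with Re(z) > −2. Then the series ∑_{k=1}^∞ μ^k/(2k + z) converges absolutely (all denominators are nonzero since Re(2k+z) > 0 for k ≥ 1), the function t ↦ μ·e^{−zt/2}/(e^t − μ) is integrable on (0,∞), and ∑_{k=1}^∞ μ^k/(2k + z) = (1/2)·∫_0^∞ μ·e^{−zt/2}/(e^t − μ) dt. -/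
/-!
For `t > 0` we have `‖μ e^{-t}‖ < 1`, so expanding `1 / (e^t - μ) = e^{-t} / (1 - μ e^{-t})` as a
geometric series writes the integrand as `∑_{k ≥ 0} μ^{k+1} e^{-(k + 1 + z/2) t}`, and the `k`-th
term integrates to `μ^{k+1} / (k + 1 + z/2)`. The integrals of the norms of these terms are
dominated by `‖μ‖^k / (1 + Re z / 2)`, which is summable; this justifies both the integrability of
the sum and the termwise integration.
-/

open MeasureTheory Set Filter

namespace MeasureTheory

variable {α E ι : Type*} [MeasurableSpace α] {μ : Measure α} [NormedAddCommGroup E] [Countable ι]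

theorem integrable_of_hasSum_of_summable_integral_norm {F : ι → α → E} {f : α → E}
    (hF_int : ∀ i, Integrable (F i) μ) (hF_sum : Summable fun i ↦ ∫ a, ‖F i a‖ ∂μ)
    (hf : ∀ᵐ a ∂μ, HasSum (F · a) (f a)) : Integrable f μ := by
  refine ⟨aestronglyMeasurable_of_tendsto_ae atTop
    (fun s ↦ s.aestronglyMeasurable_fun_sum fun i _ ↦ (hF_int i).1) hf, ?_⟩
  calc ∫⁻ a, ‖f a‖ₑ ∂μ ≤ ∫⁻ a, ∑' i, ‖F i a‖ₑ ∂μ :=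
        lintegral_mono_ae <| hf.mono fun a ha ↦ ha.tsum_eq ▸ enorm_tsum_le_tsum_enorm
    _ = ∑' i, ENNReal.ofReal (∫ a, ‖F i a‖ ∂μ) := by
        rw [lintegral_tsum fun i ↦ (hF_int i).1.enorm]
        simp_rw [ofReal_integral_norm_eq_lintegral_enorm (hF_int _)]
    _ = ENNReal.ofReal (∑' i, ∫ a, ‖F i a‖ ∂μ) :=
        (ENNReal.ofReal_tsum_of_nonneg (fun i ↦ integral_nonneg fun a ↦ norm_nonneg _) hF_sum).symm
    _ < ⊤ := ENNReal.ofReal_lt_top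

variable [NormedSpace ℝ E]

theorem hasSum_integral_of_hasSum_of_summable_integral_norm {F : ι → α → E} {f : α → E}
    (hF_int : ∀ i, Integrable (F i) μ) (hF_sum : Summable fun i ↦ ∫ a, ‖F i a‖ ∂μ)
    (hf : ∀ᵐ a ∂μ, HasSum (F · a) (f a)) : HasSum (fun i ↦ ∫ a, F i a ∂μ) (∫ a, f a ∂μ) := by
  rw [integral_congr_ae (hf.mono fun a ha ↦ ha.tsum_eq.symm)]
  exact hasSum_integral_of_summable_integral_norm hF_int hF_sum

end MeasureTheory

noncomputable def expSeriesTerm (μ z : ℂ) (k : ℕ) (t : ℝ) : ℂ :=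
  μ ^ (k + 1) * Complex.exp (-((k : ℂ) + 1 + z / 2) * t)

theorem integral_exp_neg_mul_Ioi_complex {c : ℂ} (hc : 0 < c.re) :
    ∫ t in Ioi (0 : ℝ), Complex.exp (-c * t) = 1 / c := by
  rw [integral_exp_mul_complex_Ioi (by simpa using hc)]
  simp [neg_div]

theorem integral_norm_exp_neg_mul_Ioi_complex {c : ℂ} (hc : 0 < c.re) :
    ∫ t in Ioi (0 : ℝ), ‖Complex.exp (-c * t)‖ = 1 / c.re := by
  simp_rw [Complex.norm_exp, Complex.re_mul_ofReal, Complex.neg_re]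
  rw [integral_exp_mul_Ioi (by simpa using hc)]
  simp [neg_div]

variable {μ z : ℂ}

theorem one_add_re_div_two_le (k : ℕ) : 1 + z.re / 2 ≤ ((k : ℂ) + 1 + z / 2).re := by
  simp

theorem integrableOn_expSeriesTerm (hz : -2 < z.re) (k : ℕ) :
    IntegrableOn (expSeriesTerm μ z k) (Ioi 0) := by
  have hpos : 0 < ((k : ℂ) + 1 + z / 2).re := by linarith [one_add_re_div_two_le (z := z) k]
  exact (integrableOn_exp_mul_complex_Ioi (neg_neg_of_pos hpos) 0).const_mul _

theorem integral_expSeriesTerm (hz : -2 < z.re) (k : ℕ) :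
    ∫ t in Ioi (0 : ℝ), expSeriesTerm μ z k t = 2 * μ ^ (k + 1) / (2 * ((k : ℂ) + 1) + z) := by
  have hpos : 0 < ((k : ℂ) + 1 + z / 2).re := by linarith [one_add_re_div_two_le (z := z) k]
  have hne : (k : ℂ) + 1 + z / 2 ≠ 0 := fun h ↦ by simp [h] at hpos
  simp only [expSeriesTerm]
  rw [integral_const_mul, integral_exp_neg_mul_Ioi_complex hpos]
  field_simp

theorem summable_integral_norm_expSeriesTerm (hμ : ‖μ‖ < 1) (hz : -2 < z.re) :
    Summable fun k ↦ ∫ t in Ioi (0 : ℝ), ‖expSeriesTerm μ z k t‖ := by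
  have hd : 0 < 1 + z.re / 2 := by linarith
  refine ((summable_geometric_of_lt_one (norm_nonneg μ) hμ).mul_right
    (1 / (1 + z.re / 2))).of_nonneg_of_le (fun k ↦ integral_nonneg fun t ↦ norm_nonneg _) fun k ↦ ?_
  have hle := one_add_re_div_two_le (z := z) k
  simp only [expSeriesTerm, norm_mul, norm_pow]
  have hpos := hd.trans_le hle
  rw [integral_const_mul, integral_norm_exp_neg_mul_Ioi_complex hpos]
  exact mul_le_mul (pow_le_pow_of_le_one (norm_nonneg μ) hμ.le k.le_succ)
    (one_div_le_one_div_of_le hd hle) (one_div_pos.2 hpos).le (by positivity)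

theorem hasSum_expSeriesTerm (hμ : ‖μ‖ < 1) {t : ℝ} (ht : 0 < t) :
    HasSum (expSeriesTerm μ z · t)
      (μ * Complex.exp (-(z * t) / 2) / (Complex.exp t - μ)) := by
  set x := μ * Complex.exp (-t)
  have hx : ‖x‖ < 1 := by
    rw [norm_mul, Complex.norm_exp]
    exact mul_lt_one_of_nonneg_of_lt_one_left (norm_nonneg μ) hμ
      (Real.exp_le_one_iff.2 (by simpa using ht.le))
  have hx1 : 1 - x ≠ 0 := fun h ↦ by simp [← sub_eq_zero.1 h] at hx
  have hterm (k : ℕ) : expSeriesTerm μ z k t = x * Complex.exp (-(z * t) / 2) * x ^ k := by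
    have : -((k : ℂ) + 1 + z / 2) * t = -t + -(z * t) / 2 + k * -t := by ring
    rw [expSeriesTerm, this, Complex.exp_add, Complex.exp_add, Complex.exp_nat_mul]
    ring
  have hfactor : Complex.exp t - μ = Complex.exp t * (1 - x) := by
    simp only [x, Complex.exp_neg]
    field_simp
  have hsum : μ * Complex.exp (-(z * t) / 2) / (Complex.exp t - μ) =
      x * Complex.exp (-(z * t) / 2) * (1 - x)⁻¹ := by
    rw [hfactor]
    simp only [x, Complex.exp_neg]
    field_simp
  simp_rw [hterm, hsum]
  exact (hasSum_geometric_of_norm_lt_one hx).mul_left _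

/-- For `|μ| < 1` and `Re(z) > −2`:
`∑_{k=1}^∞ μ^k/(2k + z) = (1/2)·∫_0^∞ μ·e^{−zt/2}/(e^t − μ) dt`. -/
theorem series_integral_identity_plus (μ : ℂ) (hμ : ‖μ‖ < 1)
    (z : ℂ) (hz : -2 < z.re) :
    Summable (fun k : ℕ =>
      ‖μ ^ (k + 1) / (2 * ((k : ℂ) + 1) + z)‖) ∧
    MeasureTheory.IntegrableOn
      (fun t : ℝ => μ * Complex.exp (-(z * (t : ℂ)) / 2) / (Complex.exp (t : ℂ) - μ))
      (Set.Ioi 0) ∧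
    (∑' k : ℕ, μ ^ (k + 1) / (2 * ((k : ℂ) + 1) + z)) =
      (1 / 2) * ∫ t in Set.Ioi (0 : ℝ),
        μ * Complex.exp (-(z * (t : ℂ)) / 2) / (Complex.exp (t : ℂ) - μ) := by
  have hF_int := integrableOn_expSeriesTerm (μ := μ) hz
  have hF_sum := summable_integral_norm_expSeriesTerm hμ hz
  have hF : ∀ᵐ t ∂volume.restrict (Ioi 0), HasSum (expSeriesTerm μ z · t)
      (μ * Complex.exp (-(z * t) / 2) / (Complex.exp t - μ)) :=
    (ae_restrict_iff' measurableSet_Ioi).2 (ae_of_all _ fun t ht ↦ hasSum_expSeriesTerm hμ ht)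
  have hterm (k : ℕ) : μ ^ (k + 1) / (2 * ((k : ℂ) + 1) + z) =
      1 / 2 * ∫ t in Ioi (0 : ℝ), expSeriesTerm μ z k t := by
    rw [integral_expSeriesTerm hz]
    ring
  refine ⟨?_, integrable_of_hasSum_of_summable_integral_norm hF_int hF_sum hF, ?_⟩
  · refine (hF_sum.mul_left (1 / 2)).of_nonneg_of_le (fun k ↦ norm_nonneg _) fun k ↦ ?_
    rw [hterm, norm_mul, norm_div, norm_one, Complex.norm_ofNat]
    gcongr
    exact norm_integral_le_integral_norm _
  · rw [tsum_congr hterm, tsum_mul_left,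
      (hasSum_integral_of_hasSum_of_summable_integral_norm hF_int hF_sum hF).tsum_eq]
end

section
/- Let μ ∈ ℂ with |μ| > 1, and let z ∈ ℂ with Re(z) < 0. Then the series ∑_{j=0}^∞ μ^{−j}/(z − 2j) converges absolutely (all denominators are nonzero since Re(z − 2j) < 0), the function t ↦ μ·e^{−zt/2}/(e^t − μ) is integrable on (−∞,0), and ∑_{j=0}^∞ μ^{−j}/(z − 2j) = (1/2)·∫_{−∞}^0 μ·e^{−zt/2}/(e^t − μ) dt. -/
/-!
For `t < 0` and `‖q‖ < 1` the integrand `e^{at} / (1 - q e^t)` expands as the geometric series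
`∑ q^j e^{(j+a)t}`, whose terms integrate over `(-∞, 0)` to `q^j / (j + a)` when `Re a > 0`.
The `L¹` norms `‖q‖^j / (j + Re a)` are summable, so the series may be integrated termwise.
The theorem is the case `q = μ⁻¹`, `a = -z/2`.
-/

open MeasureTheory Set Complex

section

variable {q a : ℂ}

theorem hasSum_pow_mul_cexp_of_nonpos (hq : ‖q‖ < 1) {t : ℝ} (ht : t ≤ 0) :
    HasSum (fun j : ℕ => q ^ j * cexp ((j + a) * t)) (cexp (a * t) / (1 - q * cexp t)) := by
  have hlt : ‖q * cexp t‖ < 1 := by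
    rw [norm_mul, norm_exp_ofReal]
    exact (mul_le_of_le_one_right (norm_nonneg q) (Real.exp_le_one_iff.2 ht)).trans_lt hq
  have hterm (j : ℕ) : q ^ j * cexp ((j + a) * t) = cexp (a * t) * (q * cexp t) ^ j := by
    rw [mul_pow, ← exp_nat_mul, add_mul, exp_add]
    ring
  simpa only [hterm, div_eq_mul_inv] using
    (hasSum_geometric_of_norm_lt_one hlt).mul_left (cexp (a * t))

theorem one_sub_norm_le_norm_one_sub_mul_cexp {t : ℝ} (ht : t ≤ 0) :
    1 - ‖q‖ ≤ ‖1 - q * cexp t‖ :=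
  calc 1 - ‖q‖ ≤ 1 - ‖q * cexp t‖ := by
        rw [norm_mul, norm_exp_ofReal]
        gcongr
        exact mul_le_of_le_one_right (norm_nonneg q) (Real.exp_le_one_iff.2 ht)
    _ = ‖(1 : ℂ)‖ - ‖q * cexp t‖ := by rw [norm_one]
    _ ≤ ‖1 - q * cexp t‖ := norm_sub_norm_le _ _

theorem integrableOn_Iio_cexp_mul_div_one_sub (hq : ‖q‖ < 1) (ha : 0 < a.re) :
    IntegrableOn (fun t : ℝ => cexp (a * t) / (1 - q * cexp t)) (Iio 0) := by
  have hbound : IntegrableOn (fun t : ℝ => (1 - ‖q‖)⁻¹ * Real.exp (a.re * t)) (Iio 0) :=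
    ((integrableOn_exp_mul_Iic ha 0).mono_set Iio_subset_Iic_self).const_mul _
  refine hbound.mono' (Measurable.aestronglyMeasurable (by fun_prop)) ?_
  filter_upwards [ae_restrict_mem measurableSet_Iio] with t ht
  rw [norm_div, norm_exp, div_eq_inv_mul, re_mul_ofReal]
  have hden := one_sub_norm_le_norm_one_sub_mul_cexp (q := q) ht.le
  gcongr

theorem integrableOn_Iio_pow_mul_cexp (ha : 0 < a.re) (j : ℕ) :
    IntegrableOn (fun t : ℝ => q ^ j * cexp ((j + a) * t)) (Iio 0) := by
  have hre : 0 < ((j : ℂ) + a).re := by rw [add_re, natCast_re]; positivity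
  exact ((integrableOn_exp_mul_complex_Iic hre 0).mono_set Iio_subset_Iic_self).const_mul _

theorem integral_Iio_pow_mul_cexp (ha : 0 < a.re) (j : ℕ) :
    ∫ t in Iio (0 : ℝ), q ^ j * cexp ((j + a) * t) = q ^ j / (j + a) := by
  have hre : 0 < ((j : ℂ) + a).re := by rw [add_re, natCast_re]; positivity
  rw [integral_const_mul, ← integral_Iic_eq_integral_Iio, integral_exp_mul_complex_Iic hre,
    ofReal_zero, mul_zero, exp_zero, mul_one_div]

theorem integral_Iio_norm_pow_mul_cexp (ha : 0 < a.re) (j : ℕ) :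
    ∫ t in Iio (0 : ℝ), ‖q ^ j * cexp ((j + a) * t)‖ = ‖q‖ ^ j / (j + a.re) := by
  have hpos : 0 < (j : ℝ) + a.re := by positivity
  simp_rw [norm_mul, norm_pow, norm_exp, re_mul_ofReal, add_re, natCast_re]
  rw [integral_const_mul, ← integral_Iic_eq_integral_Iio, integral_exp_mul_Iic hpos,
    mul_zero, Real.exp_zero, mul_one_div]

theorem summable_integral_Iio_norm_pow_mul_cexp (hq : ‖q‖ < 1) (ha : 0 < a.re) :
    Summable fun j : ℕ => ∫ t in Iio (0 : ℝ), ‖q ^ j * cexp ((j + a) * t)‖ := by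
  simp_rw [integral_Iio_norm_pow_mul_cexp ha]
  refine .of_nonneg_of_le (fun j => by positivity) (fun j => ?_)
    ((summable_geometric_of_lt_one (norm_nonneg q) hq).div_const a.re)
  gcongr
  exact le_add_of_nonneg_left j.cast_nonneg

theorem summable_norm_pow_div_natCast_add (hq : ‖q‖ < 1) (ha : 0 < a.re) :
    Summable fun j : ℕ => ‖q ^ j / (j + a)‖ := by
  refine .of_nonneg_of_le (fun j => norm_nonneg _) (fun j => ?_)
    (summable_integral_Iio_norm_pow_mul_cexp hq ha)
  rw [← integral_Iio_pow_mul_cexp ha]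
  exact norm_integral_le_integral_norm _

theorem tsum_pow_div_natCast_add_eq_integral_Iio (hq : ‖q‖ < 1) (ha : 0 < a.re) :
    ∑' j : ℕ, q ^ j / (j + a) = ∫ t in Iio (0 : ℝ), cexp (a * t) / (1 - q * cexp t) := by
  simp_rw [← integral_Iio_pow_mul_cexp ha]
  rw [integral_tsum_of_summable_integral_norm (integrableOn_Iio_pow_mul_cexp ha)
    (summable_integral_Iio_norm_pow_mul_cexp hq ha)]
  refine setIntegral_congr_fun measurableSet_Iio fun t ht => ?_
  exact (hasSum_pow_mul_cexp_of_nonpos hq (le_of_lt ht)).tsum_eq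

end

/-- For `|μ| > 1` and `Re(z) < 0`:
`∑_{j=0}^∞ μ^{−j}/(z − 2j) = (1/2)·∫_{−∞}^0 μ·e^{−zt/2}/(e^t − μ) dt`. -/
theorem series_integral_identity_minus (μ : ℂ) (hμ : 1 < ‖μ‖)
    (z : ℂ) (hz : z.re < 0) :
    Summable (fun j : ℕ =>
      ‖μ ^ (-(j : ℤ)) / (z - 2 * (j : ℂ))‖) ∧
    MeasureTheory.IntegrableOn
      (fun t : ℝ => μ * Complex.exp (-(z * (t : ℂ)) / 2) / (Complex.exp (t : ℂ) - μ))
      (Set.Iio 0) ∧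
    (∑' j : ℕ, μ ^ (-(j : ℤ)) / (z - 2 * (j : ℂ))) =
      (1 / 2) * ∫ t in Set.Iio (0 : ℝ),
        μ * Complex.exp (-(z * (t : ℂ)) / 2) / (Complex.exp (t : ℂ) - μ) := by
  have hμ0 : μ ≠ 0 := norm_pos_iff.1 (one_pos.trans hμ)
  have hq : ‖μ⁻¹‖ < 1 := by rw [norm_inv]; exact inv_lt_one_of_one_lt₀ hμ
  have ha : 0 < (-z / 2).re := by rw [div_ofNat_re, neg_re]; linarith
  have hterm (j : ℕ) : μ ^ (-(j : ℤ)) / (z - 2 * j) = -(1 / 2) * (μ⁻¹ ^ j / (j + -z / 2)) := by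
    rw [zpow_neg, zpow_natCast, inv_pow, show (j : ℂ) + -z / 2 = -(z - 2 * j) / 2 by ring]
    field_simp
  have hintegrand (t : ℝ) : μ * cexp (-(z * t) / 2) / (cexp t - μ) =
      -(cexp (-z / 2 * t) / (1 - μ⁻¹ * cexp t)) := by
    rw [show (1 : ℂ) - μ⁻¹ * cexp t = -(cexp t - μ) / μ by field_simp; ring, div_div_eq_mul_div,
      div_neg, neg_neg, mul_comm μ]
    ring_nf
  simp_rw [hterm, hintegrand, norm_mul]
  refine ⟨(summable_norm_pow_div_natCast_add hq ha).mul_left _,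
    (integrableOn_Iio_cexp_mul_div_one_sub hq ha).neg, ?_⟩
  rw [tsum_mul_left, tsum_pow_div_natCast_add_eq_integral_Iio hq ha, integral_neg]
  ring
end

section
/- Let x, y ∈ ℂ with Re(x) > 0 and Re(y) > 0. For every r ∈ (0,1), every factor 1 − (1−r)^n(1−yr) (n ≥ 0) is nonzero and the infinite product P(r) = ∏_{n=0}^∞ [1 − (1−r)^n(1−xr)]/[1 − (1−r)^n(1−yr)] converges. Moreover, lim_{r→0⁺} r^{x−y}·P(r) = Γ(y)/Γ(x), where r^{x−y} = exp((x−y)·ln r) with the real natural logarithm ln r, and Γ is the complex Gamma function. -/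
/-!
Put `q = 1 - r` and `c_n = qIndex r n = (1 - q^n) / (r q^n) = [n]_q / q^n`. Then
`1 - q^n (1 - z r) = r q^n (z + c_n)`, so the `n`-th factor of `P(r)` is `(x + c_n) / (y + c_n)`,
where `c_0 = 0`, `c_n ≥ n`, and `c_n → n` as `r → 0`. For `n ≥ 1` the numbers
`1 + 1/c_n = (1 - q^(n+1)) / (1 - q^n)` telescope to `∏ (1 + 1/c_n) = 1/r`, hence
`r^(x-y) P(r) = (x/y) ∏_{n ≥ 1} (1 + x/c_n) / (1 + y/c_n) · (1 + 1/c_n)^(y-x)`.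
The logarithm of the `n`-th factor is `O(1/c_n^2) = O(1/n^2)` uniformly in `r`, so by dominated
convergence the product tends to Euler's product
`(x/y) ∏_{n ≥ 1} (1 + x/n) / (1 + y/n) · (1 + 1/n)^(y-x) = Γ(y) / Γ(x)`.
-/

open Complex Filter Finset Topology

namespace QGamma

theorem ofReal_add_mem_slitPlane {z : ℂ} (hz : 0 < z.re) {t : ℝ} (ht : 0 ≤ t) :
    z + t ∈ slitPlane :=
  mem_slitPlane_iff.mpr (Or.inl (by simp; linarith))

theorem one_add_div_ofReal_ne_zero {z : ℂ} (hz : 0 ≤ z.re) {t : ℝ} (ht : 0 < t) :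
    1 + z / t ≠ 0 := by
  refine slitPlane_ne_zero (mem_slitPlane_iff.mpr (Or.inl ?_))
  rw [add_re, one_re, div_ofReal_re]
  have := div_nonneg hz ht.le
  linarith

theorem norm_log_one_add_le {w : ℂ} (hw : 0 ≤ w.re) : ‖log (1 + w)‖ ≤ ‖w‖ + Real.pi := by
  have h1 : 1 ≤ ‖1 + w‖ := by
    have := re_le_norm (1 + w)
    rw [add_re, one_re] at this
    linarith
  have hre : Real.log ‖1 + w‖ ≤ ‖w‖ :=
    calc Real.log ‖1 + w‖ ≤ ‖1 + w‖ - 1 := Real.log_le_sub_one_of_pos (by linarith)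
      _ ≤ ‖w‖ := by linarith [norm_add_le 1 w, norm_one (α := ℂ)]
  calc ‖log (1 + w)‖ ≤ |(log (1 + w)).re| + |(log (1 + w)).im| := norm_le_abs_re_add_abs_im _
    _ ≤ ‖w‖ + Real.pi := by
      rw [log_re, log_im, abs_of_nonneg (Real.log_nonneg h1)]
      exact add_le_add hre (abs_arg_le_pi _)

theorem norm_log_one_add_sub_self_le_sq {w : ℂ} (hw : 0 ≤ w.re) :
    ‖log (1 + w) - w‖ ≤ 4 * (1 + Real.pi) * ‖w‖ ^ 2 := by
  have hπ := Real.pi_pos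
  rcases le_or_gt ‖w‖ (1 / 2) with hsmall | hlarge
  · have hinv : (1 - ‖w‖)⁻¹ ≤ 2 := by
      rw [inv_le_comm₀ (by linarith) two_pos]
      linarith
    calc ‖log (1 + w) - w‖ ≤ ‖w‖ ^ 2 * (1 - ‖w‖)⁻¹ / 2 :=
          Complex.norm_log_one_add_sub_self_le (by linarith)
      _ ≤ ‖w‖ ^ 2 * 2 / 2 := by gcongr
      _ ≤ 4 * (1 + Real.pi) * ‖w‖ ^ 2 := by nlinarith [sq_nonneg ‖w‖]
  · calc ‖log (1 + w) - w‖ ≤ ‖log (1 + w)‖ + ‖w‖ := norm_sub_le _ _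
      _ ≤ 2 * ‖w‖ + Real.pi := by linarith [norm_log_one_add_le hw]
      _ ≤ 4 * (1 + Real.pi) * ‖w‖ ^ 2 := by
        have h1 : 1 ≤ 4 * ‖w‖ ^ 2 := by nlinarith
        nlinarith [mul_le_mul_of_nonneg_left h1 hπ.le]

noncomputable def qIndex (r : ℝ) (n : ℕ) : ℝ := (1 - (1 - r) ^ n) / (r * (1 - r) ^ n)

@[simp]
theorem qIndex_zero (r : ℝ) : qIndex r 0 = 0 := by simp [qIndex]

theorem qIndex_eq_geom_sum {r : ℝ} (hr : r ≠ 0) (n : ℕ) :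
    qIndex r n = (∑ k ∈ range n, (1 - r) ^ k) / (1 - r) ^ n := by
  have hgeom : 1 - (1 - r) ^ n = r * ∑ k ∈ range n, (1 - r) ^ k := by
    linear_combination geom_sum_mul (1 - r) n
  rw [qIndex, hgeom, mul_div_mul_left _ _ hr]

theorem natCast_le_qIndex {r : ℝ} (hr : r ∈ Set.Ioo 0 1) (n : ℕ) : (n : ℝ) ≤ qIndex r n := by
  have hq : 0 < 1 - r := by linarith [hr.2]
  rw [qIndex_eq_geom_sum hr.1.ne', le_div_iff₀ (pow_pos hq n)]
  calc (n : ℝ) * (1 - r) ^ n = ∑ _k ∈ range n, (1 - r) ^ n := by simp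
    _ ≤ ∑ k ∈ range n, (1 - r) ^ k := sum_le_sum fun k hk ↦
        pow_le_pow_of_le_one hq.le (by linarith [hr.1]) (mem_range.mp hk).le

theorem qIndex_nonneg {r : ℝ} (hr : r ∈ Set.Ioo 0 1) (n : ℕ) : 0 ≤ qIndex r n :=
  n.cast_nonneg.trans (natCast_le_qIndex hr n)

theorem one_add_inv_qIndex {r : ℝ} (hr : r ∈ Set.Ioo 0 1) {n : ℕ} (hn : n ≠ 0) :
    1 + (qIndex r n)⁻¹ = (1 - (1 - r) ^ (n + 1)) / (1 - (1 - r) ^ n) := by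
  have hq : 0 < 1 - r := by linarith [hr.2]
  have hqn : (1 - r) ^ n < 1 := pow_lt_one₀ hq.le (by linarith [hr.1]) hn
  have : (1 - r) ^ n ≠ 0 := (pow_pos hq n).ne'
  have : 1 - (1 - r) ^ n ≠ 0 := by linarith
  have : r ≠ 0 := hr.1.ne'
  rw [qIndex, inv_div]
  field_simp
  ring

theorem tendsto_qIndex (n : ℕ) : Tendsto (qIndex · n) (𝓝[≠] 0) (𝓝 n) := by
  have hcont : ContinuousAt (fun r : ℝ ↦ (∑ k ∈ range n, (1 - r) ^ k) / (1 - r) ^ n) 0 := by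
    fun_prop (disch := norm_num)
  have h := hcont.tendsto.mono_left (nhdsWithin_le_nhds (s := {0}ᶜ))
  simp only [sub_zero, one_pow, sum_const, card_range, nsmul_eq_mul, mul_one, div_one] at h
  refine h.congr' ?_
  filter_upwards [self_mem_nhdsWithin] with r hr
  exact (qIndex_eq_geom_sum hr n).symm

theorem hasSum_log_one_add_inv_qIndex {r : ℝ} (hr : r ∈ Set.Ioo 0 1) :
    HasSum (fun n ↦ Real.log (1 + (qIndex r (n + 1))⁻¹)) (-Real.log r) := by
  have hq : 0 < 1 - r := by linarith [hr.2]
  have hpos : ∀ n : ℕ, 0 < 1 - (1 - r) ^ (n + 1) := fun n ↦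
    sub_pos.mpr (pow_lt_one₀ hq.le (by linarith [hr.1]) n.succ_ne_zero)
  have htel : ∀ N, ∑ n ∈ range N, Real.log (1 + (qIndex r (n + 1))⁻¹)
      = Real.log (1 - (1 - r) ^ (N + 1)) - Real.log r := by
    intro N
    rw [show Real.log r = Real.log (1 - (1 - r) ^ (0 + 1)) by norm_num,
      ← sum_range_sub (fun n ↦ Real.log (1 - (1 - r) ^ (n + 1)))]
    refine sum_congr rfl fun n _ ↦ ?_
    rw [one_add_inv_qIndex hr n.succ_ne_zero, Real.log_div (hpos _).ne' (hpos n).ne']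
  have hnonneg : ∀ n : ℕ, 0 ≤ Real.log (1 + (qIndex r (n + 1))⁻¹) := fun n ↦
    Real.log_nonneg (le_add_of_nonneg_right
      (inv_nonneg.mpr ((Nat.cast_nonneg _).trans (natCast_le_qIndex hr _))))
  rw [hasSum_iff_tendsto_nat_of_nonneg hnonneg]
  simp only [htel]
  have hpow : Tendsto (fun N : ℕ ↦ 1 - (1 - r) ^ (N + 1)) atTop (𝓝 1) := by
    simpa using tendsto_const_nhds.sub ((tendsto_pow_atTop_nhds_zero_of_lt_one hq.le
      (by linarith [hr.1])).comp (tendsto_add_atTop_nat 1))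
  simpa using ((Real.continuousAt_log one_ne_zero).tendsto.comp hpow).sub_const (Real.log r)

theorem one_sub_pow_mul_eq {r : ℝ} (hr₀ : r ≠ 0) (hr₁ : r ≠ 1) (z : ℂ) (n : ℕ) :
    1 - (1 - (r : ℂ)) ^ n * (1 - z * r) = r * (1 - r) ^ n * (z + qIndex r n) := by
  have : (r : ℂ) ≠ 0 := ofReal_ne_zero.mpr hr₀
  have : (1 - r : ℂ) ≠ 0 := sub_ne_zero.mpr (by exact_mod_cast hr₁.symm)
  rw [qIndex]
  push_cast
  field_simp
  ring

theorem ofReal_mul_one_sub_pow_ne_zero {r : ℝ} (hr₀ : r ≠ 0) (hr₁ : r ≠ 1) (n : ℕ) :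
    (r : ℂ) * (1 - r) ^ n ≠ 0 :=
  mul_ne_zero (ofReal_ne_zero.mpr hr₀)
    (pow_ne_zero _ (sub_ne_zero.mpr (by exact_mod_cast hr₁.symm)))

theorem one_sub_pow_mul_ne_zero {r : ℝ} (hr : r ∈ Set.Ioo 0 1) {z : ℂ} (hz : 0 < z.re) (n : ℕ) :
    1 - (1 - (r : ℂ)) ^ n * (1 - z * r) ≠ 0 := by
  rw [one_sub_pow_mul_eq hr.1.ne' hr.2.ne]
  exact mul_ne_zero (ofReal_mul_one_sub_pow_ne_zero hr.1.ne' hr.2.ne n)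
    (slitPlane_ne_zero (ofReal_add_mem_slitPlane hz (qIndex_nonneg hr n)))

/-- Logarithm of the `t`-th factor `(1 + x/t) / (1 + y/t) · (1 + 1/t)^(y - x)` of Euler's product
for `Γ(y) / Γ(x)`. -/
noncomputable def eulerLogFactor (x y : ℂ) (t : ℝ) : ℂ :=
  log (x + t) - log (y + t) - (x - y) * Real.log (1 + t⁻¹)

theorem eulerLogFactor_eq {x y : ℂ} (hx : 0 ≤ x.re) (hy : 0 ≤ y.re) {t : ℝ} (ht : 0 < t) :
    eulerLogFactor x y t = (log (1 + x / t) - x / t) - (log (1 + y / t) - y / t)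
      - (x - y) * (log (1 + 1 / t) - 1 / t) := by
  have hlog : ∀ z : ℂ, 0 ≤ z.re → log (z + t) = Real.log t + log (1 + z / t) := fun z hz ↦ by
    rw [← log_ofReal_mul ht (one_add_div_ofReal_ne_zero hz ht)]
    congr 1
    field_simp [ofReal_ne_zero.mpr ht.ne']
    ring
  rw [eulerLogFactor, hlog x hx, hlog y hy, ofReal_log (x := 1 + t⁻¹) (by positivity)]
  push_cast
  rw [one_div]
  ring

theorem norm_eulerLogFactor_le {x y : ℂ} (hx : 0 ≤ x.re) (hy : 0 ≤ y.re) {t : ℝ} (ht : 0 < t) :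
    ‖eulerLogFactor x y t‖ ≤ 4 * (1 + Real.pi) * (‖x‖ ^ 2 + ‖y‖ ^ 2 + ‖x - y‖) / t ^ 2 := by
  have hw : ∀ z : ℂ, 0 ≤ z.re →
      ‖log (1 + z / t) - z / t‖ ≤ 4 * (1 + Real.pi) * (‖z‖ ^ 2 / t ^ 2) := fun z hz ↦ by
    have := norm_log_one_add_sub_self_le_sq (w := z / t) (by rw [div_ofReal_re]; positivity)
    rwa [norm_div, norm_real, Real.norm_of_nonneg ht.le, div_pow] at this
  rw [eulerLogFactor_eq hx hy ht]
  calc _ ≤ ‖log (1 + x / t) - x / t‖ + ‖log (1 + y / t) - y / t‖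
        + ‖x - y‖ * ‖log (1 + 1 / t) - 1 / t‖ := by
        refine (norm_sub_le _ _).trans ?_
        rw [norm_mul]
        gcongr
        exact norm_sub_le _ _
    _ ≤ 4 * (1 + Real.pi) * (‖x‖ ^ 2 / t ^ 2) + 4 * (1 + Real.pi) * (‖y‖ ^ 2 / t ^ 2)
        + ‖x - y‖ * (4 * (1 + Real.pi) * (‖(1 : ℂ)‖ ^ 2 / t ^ 2)) := by
        gcongr
        · exact hw x hx
        · exact hw y hy
        · exact hw 1 zero_le_one
    _ = _ := by
        rw [norm_one]
        ring

theorem norm_eulerLogFactor_le_of_le {x y : ℂ} (hx : 0 ≤ x.re) (hy : 0 ≤ y.re) {n : ℕ} {t : ℝ}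
    (ht : (n : ℝ) + 1 ≤ t) :
    ‖eulerLogFactor x y t‖
      ≤ 4 * (1 + Real.pi) * (‖x‖ ^ 2 + ‖y‖ ^ 2 + ‖x - y‖) / ((n : ℝ) + 1) ^ 2 :=
  (norm_eulerLogFactor_le hx hy ((by positivity : (0 : ℝ) < n + 1).trans_le ht)).trans (by gcongr)

theorem summable_const_div_natCast_add_one_sq (C : ℝ) :
    Summable fun n : ℕ ↦ C / ((n : ℝ) + 1) ^ 2 := by
  have := (summable_nat_add_iff 1).mpr (Real.summable_nat_pow_inv.mpr one_lt_two)
  simpa [div_eq_mul_inv] using this.mul_left C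

theorem summable_eulerLogFactor_comp {x y : ℂ} (hx : 0 ≤ x.re) (hy : 0 ≤ y.re) {u : ℕ → ℝ}
    (hu : ∀ n : ℕ, (n : ℝ) + 1 ≤ u n) : Summable fun n ↦ eulerLogFactor x y (u n) :=
  (summable_const_div_natCast_add_one_sq _).of_norm_bounded
    fun n ↦ norm_eulerLogFactor_le_of_le hx hy (hu n)

theorem continuousAt_eulerLogFactor {x y : ℂ} (hx : 0 < x.re) (hy : 0 < y.re) {t : ℝ}
    (ht : 0 < t) : ContinuousAt (eulerLogFactor x y) t := by
  have hlog : ∀ z : ℂ, 0 < z.re → ContinuousAt (fun s : ℝ ↦ log (z + s)) t := fun z hz ↦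
    (continuousAt_const.add continuous_ofReal.continuousAt).clog
      (ofReal_add_mem_slitPlane hz ht.le)
  have hreal : ContinuousAt (fun s : ℝ ↦ Real.log (1 + s⁻¹)) t :=
    (continuousAt_const.add (continuousAt_inv₀ ht.ne')).log
      (by positivity : (0 : ℝ) < 1 + t⁻¹).ne'
  exact ((hlog x hx).sub (hlog y hy)).sub
    (continuousAt_const.mul (continuous_ofReal.continuousAt.comp hreal))

theorem sum_log_one_add_inv_natCast (n : ℕ) :
    ∑ j ∈ range n, Real.log (1 + ((j : ℝ) + 1)⁻¹) = Real.log (n + 1) := by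
  induction n with
  | zero => simp
  | succ n ih =>
    have : (n : ℝ) + 1 ≠ 0 := by positivity
    rw [sum_range_succ, ih, ← Real.log_mul this (by positivity)]
    push_cast
    congr 1
    field_simp

theorem sum_log_sub_log_natCast {x y : ℂ} (n : ℕ) :
    ∑ j ∈ range (n + 1), (log (x + j) - log (y + j))
      = log x - log y + ∑ j ∈ range n, eulerLogFactor x y (j + 1)
        + (x - y) * Real.log (n + 1) := by
  rw [sum_range_succ', ← sum_log_one_add_inv_natCast, ofReal_sum, mul_sum]
  simp only [eulerLogFactor, sum_sub_distrib, Nat.cast_zero, add_zero, Nat.cast_add, Nat.cast_one,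
    ofReal_add, ofReal_natCast, ofReal_one]
  ring

theorem GammaSeq_div_GammaSeq_eq_exp {x y : ℂ} (hx : 0 < x.re) (hy : 0 < y.re) {n : ℕ}
    (hn : n ≠ 0) :
    GammaSeq y n / GammaSeq x n = exp (log x - log y + ∑ j ∈ range n, eulerLogFactor x y (j + 1)
      + (x - y) * (Real.log (n + 1) - Real.log n)) := by
  have hne : ∀ z : ℂ, 0 < z.re → ∀ j : ℕ, z + j ≠ 0 := fun z hz j ↦ by
    simpa using slitPlane_ne_zero (ofReal_add_mem_slitPlane hz j.cast_nonneg)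
  have hprod : ∏ j ∈ range (n + 1), (x + j) / (y + j)
      = exp (∑ j ∈ range (n + 1), (log (x + j) - log (y + j))) := by
    rw [exp_sum]
    exact prod_congr rfl fun j _ ↦ by rw [exp_sub, exp_log (hne x hx j), exp_log (hne y hy j)]
  have hn' : (n : ℂ) ≠ 0 := Nat.cast_ne_zero.mpr hn
  have hfact : (n.factorial : ℂ) ≠ 0 := Nat.cast_ne_zero.mpr n.factorial_ne_zero
  have hprod_ne : ∀ z : ℂ, 0 < z.re → ∏ j ∈ range (n + 1), (z + j) ≠ 0 := fun z hz ↦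
    prod_ne_zero_iff.mpr fun j _ ↦ hne z hz j
  calc GammaSeq y n / GammaSeq x n
      = exp ((y - x) * log n) * ∏ j ∈ range (n + 1), (x + j) / (y + j) := by
        rw [GammaSeq, GammaSeq, cpow_def_of_ne_zero hn', cpow_def_of_ne_zero hn',
          prod_div_distrib, sub_mul, exp_sub]
        field_simp [hfact, hprod_ne x hx, hprod_ne y hy]
    _ = _ := by
        rw [hprod, sum_log_sub_log_natCast, ← exp_add, natCast_log]
        congr 1
        ring

theorem Gamma_div_Gamma_eq_exp {x y : ℂ} (hx : 0 < x.re) (hy : 0 < y.re) :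
    Gamma y / Gamma x = exp (log x - log y + ∑' n : ℕ, eulerLogFactor x y (n + 1)) := by
  refine tendsto_nhds_unique ((GammaSeq_tendsto_Gamma y).div (GammaSeq_tendsto_Gamma x)
    (Gamma_ne_zero_of_re_pos hx)) ?_
  have hS := (summable_eulerLogFactor_comp hx.le hy.le fun n : ℕ ↦ le_rfl).hasSum.tendsto_sum_nat
  have hδ := (continuous_ofReal.tendsto 0).comp Real.tendsto_log_nat_add_one_sub_log
  have hlim := (continuous_exp.tendsto _).comp
    ((hS.const_add (log x - log y)).add (hδ.const_mul (x - y)))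
  rw [ofReal_zero, mul_zero, add_zero] at hlim
  refine hlim.congr' ?_
  filter_upwards [eventually_ne_atTop 0] with n hn
  simp only [Function.comp_apply, Pi.div_apply, GammaSeq_div_GammaSeq_eq_exp hx hy hn, ofReal_sub]

theorem hasSum_log_sub_log_qIndex {x y : ℂ} (hx : 0 ≤ x.re) (hy : 0 ≤ y.re) {r : ℝ}
    (hr : r ∈ Set.Ioo 0 1) :
    HasSum (fun n ↦ log (x + qIndex r n) - log (y + qIndex r n))
      (log x - log y + ∑' n, eulerLogFactor x y (qIndex r (n + 1)) - (x - y) * Real.log r) := by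
  have hS := (summable_eulerLogFactor_comp hx hy fun n : ℕ ↦ by
    exact_mod_cast natCast_le_qIndex hr (n + 1)).hasSum
  have hL := (hasSum_ofReal.mpr (hasSum_log_one_add_inv_qIndex hr)).mul_left (x - y)
  have hshift : HasSum (fun n ↦ log (x + qIndex r (n + 1)) - log (y + qIndex r (n + 1)))
      (∑' n, eulerLogFactor x y (qIndex r (n + 1)) + (x - y) * ↑(-Real.log r)) := by
    convert hS.add hL using 2 with n
    simp only [eulerLogFactor]
    ring
  have h := (hasSum_nat_add_iff
    (f := fun n ↦ log (x + qIndex r n) - log (y + qIndex r n)) 1).mp hshift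
  rw [sum_range_one, qIndex_zero] at h
  convert h using 1
  · rfl
  · simp only [ofReal_zero, add_zero, ofReal_neg]
    ring

theorem hasProd_one_sub_pow_mul_div {x y : ℂ} (hx : 0 < x.re) (hy : 0 < y.re) {r : ℝ}
    (hr : r ∈ Set.Ioo 0 1) :
    HasProd
      (fun n ↦ (1 - (1 - (r : ℂ)) ^ n * (1 - x * r)) / (1 - (1 - (r : ℂ)) ^ n * (1 - y * r)))
      (exp (log x - log y + ∑' n, eulerLogFactor x y (qIndex r (n + 1))
        - (x - y) * Real.log r)) := by
  convert (hasSum_log_sub_log_qIndex hx.le hy.le hr).cexp using 1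
  funext n
  have hne : ∀ z : ℂ, 0 < z.re → z + qIndex r n ≠ 0 := fun z hz ↦
    slitPlane_ne_zero (ofReal_add_mem_slitPlane hz (qIndex_nonneg hr n))
  rw [Function.comp_apply, exp_sub, exp_log (hne x hx), exp_log (hne y hy),
    one_sub_pow_mul_eq hr.1.ne' hr.2.ne, one_sub_pow_mul_eq hr.1.ne' hr.2.ne,
    mul_div_mul_left _ _ (ofReal_mul_one_sub_pow_ne_zero hr.1.ne' hr.2.ne n)]

theorem tendsto_tsum_eulerLogFactor_qIndex {x y : ℂ} (hx : 0 < x.re) (hy : 0 < y.re) :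
    Tendsto (fun r ↦ ∑' n, eulerLogFactor x y (qIndex r (n + 1))) (𝓝[Set.Ioo 0 1] 0)
      (𝓝 (∑' n : ℕ, eulerLogFactor x y (n + 1))) := by
  refine tendsto_tsum_of_dominated_convergence
    (summable_const_div_natCast_add_one_sq (4 * (1 + Real.pi) * (‖x‖ ^ 2 + ‖y‖ ^ 2 + ‖x - y‖)))
    (fun n ↦ ?_) ?_
  · have hq := (tendsto_qIndex (n + 1)).mono_left
      (nhdsWithin_mono _ fun r (hr : r ∈ Set.Ioo (0 : ℝ) 1) ↦ hr.1.ne')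
    push_cast at hq
    exact (continuousAt_eulerLogFactor hx hy (by positivity)).tendsto.comp hq
  · filter_upwards [self_mem_nhdsWithin] with r hr n
    refine norm_eulerLogFactor_le_of_le hx.le hy.le ?_
    exact_mod_cast natCast_le_qIndex hr (n + 1)

end QGamma

open QGamma in
/-- The q-Gamma limit: for `Re(x), Re(y) > 0`, the infinite products
`P(r) = ∏_{n=0}^∞ [1 − (1−r)^n(1−xr)]/[1 − (1−r)^n(1−yr)]` are well defined for
`r ∈ (0,1)`, and `r^{x−y}·P(r) → Γ(y)/Γ(x)` as `r → 0⁺`. -/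
theorem qgamma_product_limit (x y : ℂ) (hx : 0 < x.re) (hy : 0 < y.re) :
    (∀ r : ℝ, r ∈ Set.Ioo (0 : ℝ) 1 →
      (∀ n : ℕ, (1 : ℂ) - (1 - (r : ℂ)) ^ n * (1 - y * (r : ℂ)) ≠ 0) ∧
      Multipliable (fun n : ℕ =>
        ((1 : ℂ) - (1 - (r : ℂ)) ^ n * (1 - x * (r : ℂ))) /
          ((1 : ℂ) - (1 - (r : ℂ)) ^ n * (1 - y * (r : ℂ))))) ∧
    Filter.Tendsto
      (fun r : ℝ => Complex.exp ((x - y) * (Real.log r : ℂ)) *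
        ∏' n : ℕ, ((1 : ℂ) - (1 - (r : ℂ)) ^ n * (1 - x * (r : ℂ))) /
          ((1 : ℂ) - (1 - (r : ℂ)) ^ n * (1 - y * (r : ℂ))))
      (nhdsWithin 0 (Set.Ioo (0 : ℝ) 1))
      (nhds (Complex.Gamma y / Complex.Gamma x)) := by
  refine ⟨fun r hr ↦ ⟨one_sub_pow_mul_ne_zero hr hy,
    (hasProd_one_sub_pow_mul_div hx hy hr).multipliable⟩, ?_⟩
  have hlim := (continuous_exp.tendsto _).comp
    ((tendsto_tsum_eulerLogFactor_qIndex hx hy).const_add (log x - log y))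
  rw [← Gamma_div_Gamma_eq_exp hx hy] at hlim
  refine hlim.congr' ?_
  filter_upwards [self_mem_nhdsWithin] with r hr
  rw [Function.comp_apply, (hasProd_one_sub_pow_mul_div hx hy hr).tprod_eq, ← exp_add]
  congr 1
  ring
end
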